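/- arXiv:1203.6608 — 3 statements merged into one kernel-verified Lean document; each statement's English description precedes it below -/
import Mathlib

section
/- If u and v are transmission solutions at the same spectral parameter λ ∈ ℂ, then the modified Wronskian x ↦ w(x)(u(x)v'(x) − u'(x)v(x)) is constant on [0,d₁) ∪ (d₁,d₂) ∪ ⋯ ∪ (d_{m−1},π], i.e. it takes the same value at every point of [0,π] other than the transmission points d₁,…,d_{m−1}. -/
open MeasureTheory Set Filter Topology Finset
open scoped Real BigOperators ComplexConjugate

noncomputable section

/-- The piecewise-constant weight function: `w = 1` on `(0, d 1)` and
`w = (a 1 * b 1 * ⋯ * a j * b j)⁻¹` on `(d j, d (j+1))`. -/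
def wfun (m : ℕ) (d a b : ℕ → ℝ) (x : ℝ) : ℝ :=
  ∏ i ∈ Finset.Icc 1 (m - 1), (if d i < x then (a i * b i)⁻¹ else 1)

/-- `y`, with derivative `y'`, is a transmission solution of `-y'' + q y = λ y` on `[0, π]`
for the transmission data `(a i, b i, c i)` at the interior points `d i`, `1 ≤ i ≤ m - 1`:
on each subinterval `(d j, d (j+1))` the function `y` is differentiable with derivative `y'`,
`y'` is absolutely continuous with a.e. derivative `(q - λ) y` (expressed in integrated form),
`y` and `y'` are right-continuous at each `d j`, `j < m`, left-continuous at `d m = π`, and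
the one-sided limits at the interior points satisfy the transmission conditions. -/
def IsTransSol (m : ℕ) (d a b c : ℕ → ℝ) (q : ℝ → ℝ) (lam : ℂ) (y y' : ℝ → ℂ) : Prop :=
  (∀ j < m, ∀ x ∈ Set.Ioo (d j) (d (j + 1)), HasDerivAt y (y' x) x) ∧
  (∀ j < m, ∀ s ∈ Set.Ioo (d j) (d (j + 1)), ∀ t ∈ Set.Ioo (d j) (d (j + 1)),
      y' t - y' s = ∫ x in s..t, ((q x : ℂ) - lam) * y x) ∧
  (∀ j < m, ContinuousWithinAt y (Set.Ici (d j)) (d j) ∧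
      ContinuousWithinAt y' (Set.Ici (d j)) (d j)) ∧
  (ContinuousWithinAt y (Set.Iic (d m)) (d m) ∧ ContinuousWithinAt y' (Set.Iic (d m)) (d m)) ∧
  (∀ i, 1 ≤ i → i < m → ∃ yl yl' : ℂ,
      Filter.Tendsto y (nhdsWithin (d i) (Set.Iio (d i))) (nhds yl) ∧
      Filter.Tendsto y' (nhdsWithin (d i) (Set.Iio (d i))) (nhds yl') ∧
      y (d i) = (a i : ℂ) * yl ∧ y' (d i) = (b i : ℂ) * yl' + (c i : ℂ) * yl)

/-! On each cell `(d j, d (j + 1))` the ordinary Wronskian `u v' - u' v` is absolutely continuous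
(`v'` is a primitive of the integrable `(q - λ) v`) with a.e. derivative
`u (q - λ) v - (q - λ) u v = 0`, hence equal to a constant `C j`. One-sided continuity extends
this to the ends of the cells, and the transmission conditions give `C j = a j b j C (j - 1)`,
which the jump of the weight `w` at `d j` exactly compensates. -/

/-- Such an `F` is dominated on `uIcc a b` by the real primitive of `‖g‖`. -/
theorem absolutelyContinuousOnInterval_of_sub_eq_integral {E : Type*} [NormedAddCommGroup E]
    [NormedSpace ℝ E] {a b : ℝ} {F g : ℝ → E}
    (hg : IntervalIntegrable g volume a b)
    (hF : ∀ x ∈ uIcc a b, ∀ y ∈ uIcc a b, F y - F x = ∫ t in x..y, g t) :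
    AbsolutelyContinuousOnInterval F a b := by
  have hG := hg.norm.absolutelyContinuousOnInterval_intervalIntegral (c := a) left_mem_uIcc
  have hdist : ∀ x ∈ uIcc a b, ∀ y ∈ uIcc a b,
      dist (F x) (F y) ≤ dist (∫ t in a..x, ‖g t‖) (∫ t in a..y, ‖g t‖) := by
    intro x hx y hy
    have hgx := hg.mono_set (uIcc_subset_uIcc left_mem_uIcc hx)
    have hgy := hg.mono_set (uIcc_subset_uIcc left_mem_uIcc hy)
    rw [dist_eq_norm, dist_eq_norm, hF y hy x hx,
      intervalIntegral.integral_interval_sub_left hgx.norm hgy.norm, Real.norm_eq_abs]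
    exact intervalIntegral.norm_integral_le_abs_integral_norm
  refine squeeze_zero' (Eventually.of_forall fun _ => Finset.sum_nonneg fun _ _ => dist_nonneg)
    (eventually_inf_principal.mpr (Eventually.of_forall fun E hE => ?_)) hG
  exact Finset.sum_le_sum fun i hi => hdist _ (hE.1 i hi).1 _ (hE.1 i hi).2

/-- Carathéodory solutions of `y'' = p y` on `(α, β)`. -/
def IsSolutionOn (p : ℝ → ℂ) (α β : ℝ) (y y' : ℝ → ℂ) : Prop :=
  (∀ x ∈ Ioo α β, HasDerivAt y (y' x) x) ∧
    ∀ s ∈ Ioo α β, ∀ t ∈ Ioo α β, y' t - y' s = ∫ x in s..t, p x * y x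

def wronskian (u u' v v' : ℝ → ℂ) (x : ℝ) : ℂ := u x * v' x - u' x * v x

namespace IsSolutionOn

variable {p : ℝ → ℂ} {α β s t : ℝ} {y y' : ℝ → ℂ}

theorem intervalIntegrable_mul (hy : IsSolutionOn p α β y y') (hp : IntegrableOn p (Ioo α β))
    (hs : s ∈ Ioo α β) (ht : t ∈ Ioo α β) :
    IntervalIntegrable (fun x => p x * y x) volume s t := by
  have hsub : uIcc s t ⊆ Ioo α β := ordConnected_Ioo.uIcc_subset hs ht
  refine IntegrableOn.intervalIntegrable ((hp.mono_set hsub).mul_continuousOn ?_ isCompact_uIcc)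
  exact fun x hx => (hy.1 x (hsub hx)).continuousAt.continuousWithinAt

theorem absolutelyContinuousOnInterval_deriv (hy : IsSolutionOn p α β y y')
    (hp : IntegrableOn p (Ioo α β)) (hs : s ∈ Ioo α β) (ht : t ∈ Ioo α β) :
    AbsolutelyContinuousOnInterval y' s t := by
  have hsub : uIcc s t ⊆ Ioo α β := ordConnected_Ioo.uIcc_subset hs ht
  exact absolutelyContinuousOnInterval_of_sub_eq_integral (hy.intervalIntegrable_mul hp hs ht)
    fun x hx x' hx' => hy.2 x (hsub hx) x' (hsub hx')

theorem absolutelyContinuousOnInterval (hy : IsSolutionOn p α β y y')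
    (hp : IntegrableOn p (Ioo α β)) (hs : s ∈ Ioo α β) (ht : t ∈ Ioo α β) :
    AbsolutelyContinuousOnInterval y s t := by
  have hsub : uIcc s t ⊆ Ioo α β := ordConnected_Ioo.uIcc_subset hs ht
  have hy' : IntervalIntegrable y' volume s t :=
    (hy.absolutelyContinuousOnInterval_deriv hp hs ht).continuousOn.intervalIntegrable
  refine absolutelyContinuousOnInterval_of_sub_eq_integral hy' fun x hx x' hx' => ?_
  refine (intervalIntegral.integral_eq_sub_of_hasDerivAt (fun z hz => hy.1 z ?_)
    (hy'.mono_set (uIcc_subset_uIcc hx hx'))).symm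
  exact hsub (uIcc_subset_uIcc hx hx' hz)

theorem ae_hasDerivAt_deriv (hy : IsSolutionOn p α β y y') (hp : IntegrableOn p (Ioo α β))
    (hs : s ∈ Ioo α β) (ht : t ∈ Ioo α β) :
    ∀ᵐ x, x ∈ uIcc s t → HasDerivAt y' (p x * y x) x := by
  have hsub : uIcc s t ⊆ Ioo α β := ordConnected_Ioo.uIcc_subset hs ht
  filter_upwards [(hy.intervalIntegrable_mul hp hs ht).ae_hasDerivAt_integral] with x hprim hx
  refine ((hprim hx s left_mem_uIcc).const_add (y' s)).congr_of_eventuallyEq ?_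
  filter_upwards [isOpen_Ioo.mem_nhds (hsub hx)] with z hz
  rw [← hy.2 s hs z hz, add_sub_cancel]

theorem wronskian_eq {u u' v v' : ℝ → ℂ} (hu : IsSolutionOn p α β u u')
    (hv : IsSolutionOn p α β v v') (hp : IntegrableOn p (Ioo α β))
    (hs : s ∈ Ioo α β) (ht : t ∈ Ioo α β) :
    wronskian u u' v v' t = wronskian u u' v v' s := by
  have hsub : uIcc s t ⊆ Ioo α β := ordConnected_Ioo.uIcc_subset hs ht
  have hW : AbsolutelyContinuousOnInterval (wronskian u u' v v') s t :=
    ((hu.absolutelyContinuousOnInterval hp hs ht).fun_smul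
      (hv.absolutelyContinuousOnInterval_deriv hp hs ht)).sub
    ((hu.absolutelyContinuousOnInterval_deriv hp hs ht).fun_smul
      (hv.absolutelyContinuousOnInterval hp hs ht))
  have hW' : ∀ᵐ x, x ∈ uIcc s t → HasDerivAt (wronskian u u' v v') 0 x := by
    filter_upwards [hu.ae_hasDerivAt_deriv hp hs ht, hv.ae_hasDerivAt_deriv hp hs ht]
      with x hu'' hv'' hx
    have h := ((hu.1 x (hsub hx)).mul (hv'' hx)).sub ((hu'' hx).mul (hv.1 x (hsub hx)))
    rwa [show u' x * v' x + u x * (p x * v x) - (p x * u x * v x + u' x * v' x) = 0 by ring] at h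
  obtain ⟨C, hC⟩ := hW.const_of_ae_hasDerivAt_zero hW'
  rw [hC t right_mem_uIcc, hC s left_mem_uIcc]

end IsSolutionOn

theorem eq_of_tendsto_nhdsGT_of_eqOn {X : Type*} [TopologicalSpace X] [T2Space X] {f : ℝ → X}
    {l r : ℝ} {y c : X} (hlr : l < r) (hf : Tendsto f (𝓝[>] l) (𝓝 y))
    (hc : EqOn f (fun _ => c) (Ioo l r)) : y = c :=
  tendsto_nhds_unique (hf.congr' (eventuallyEq_of_mem (Ioo_mem_nhdsGT hlr) hc)) tendsto_const_nhds

theorem eq_of_tendsto_nhdsLT_of_eqOn {X : Type*} [TopologicalSpace X] [T2Space X] {f : ℝ → X}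
    {l r : ℝ} {y c : X} (hlr : l < r) (hf : Tendsto f (𝓝[<] r) (𝓝 y))
    (hc : EqOn f (fun _ => c) (Ioo l r)) : y = c :=
  tendsto_nhds_unique (hf.congr' (eventuallyEq_of_mem (Ioo_mem_nhdsLT hlr) hc)) tendsto_const_nhds

theorem exists_lt_mem_Icc_succ {α : Type*} [LinearOrder α] {d : ℕ → α} {x : α} :
    ∀ {n : ℕ}, 0 < n → x ∈ Icc (d 0) (d n) → ∃ j < n, x ∈ Icc (d j) (d (j + 1))
  | n + 1, _, hx => by
    by_cases h : 0 < n ∧ x ≤ d n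
    · obtain ⟨j, hj, hxj⟩ := exists_lt_mem_Icc_succ h.1 ⟨hx.1, h.2⟩
      exact ⟨j, by omega, hxj⟩
    · refine ⟨n, by omega, ?_, hx.2⟩
      rcases Nat.eq_zero_or_pos n with rfl | hn
      · exact hx.1
      · exact (lt_of_not_ge fun h' => h ⟨hn, h'⟩).le

theorem prod_Icc_inv_mul_eq_of_eq_mul {K : Type*} [Field K] {r C : ℕ → K} {n : ℕ}
    (hr : ∀ i, 1 ≤ i → i ≤ n → r i ≠ 0) (hC : ∀ i < n, C (i + 1) = r (i + 1) * C i) :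
    (∏ i ∈ Finset.Icc 1 n, (r i)⁻¹) * C n = C 0 := by
  induction n with
  | zero => simp
  | succ n ih =>
    rw [Finset.prod_Icc_succ_top (by omega), hC n (by omega), mul_assoc,
      inv_mul_cancel_left₀ (hr (n + 1) (by omega) le_rfl)]
    exact ih (fun i h1 h2 => hr i h1 (by omega)) fun i hi => hC i (by omega)

section Transmission

variable {m : ℕ} {d a b c : ℕ → ℝ} {q : ℝ → ℝ} {lam : ℂ} {u u' v v' : ℝ → ℂ}

theorem wfun_eq_prod (hd : StrictMonoOn d (Set.Iic m)) {j : ℕ} (hj : j < m) {x : ℝ}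
    (hx : x ∈ Icc (d j) (d (j + 1))) (hxd : ∀ i, 1 ≤ i → i < m → x ≠ d i) :
    wfun m d a b x = ∏ i ∈ Finset.Icc 1 j, (a i * b i)⁻¹ := by
  rw [wfun, ← Finset.prod_subset (Finset.Icc_subset_Icc_right (by omega : j ≤ m - 1))]
  · refine Finset.prod_congr rfl fun i hi => if_pos ?_
    rw [Finset.mem_Icc] at hi
    have hdi : d i ≤ d j := hd.monotoneOn (by simp; omega) (by simp; omega) hi.2
    exact (hdi.trans hx.1).lt_of_ne (hxd i hi.1 (by omega)).symm
  · intro i hi hni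
    simp only [Finset.mem_Icc, not_and, not_le] at hi hni
    have hdi : d (j + 1) ≤ d i := hd.monotoneOn (by simp; omega) (by simp; omega) (hni hi.1)
    exact if_neg (hx.2.trans hdi).not_gt

theorem IsTransSol.isSolutionOn (hy : IsTransSol m d a b c q lam u u') {j : ℕ} (hj : j < m) :
    IsSolutionOn (fun x => (q x : ℂ) - lam) (d j) (d (j + 1)) u u' :=
  ⟨hy.1 j hj, hy.2.1 j hj⟩

theorem IsTransSol.exists_wronskian_eqOn (hu : IsTransSol m d a b c q lam u u')
    (hv : IsTransSol m d a b c q lam v v') (hd : StrictMonoOn d (Set.Iic m)) (hd0 : d 0 = 0)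
    (hdm : d m = π) (hq : IntegrableOn q (Ioo 0 π)) :
    ∃ C : ℕ → ℂ, ∀ j < m,
      EqOn (wronskian u u' v v') (fun _ => C j) (Ioo (d j) (d (j + 1))) := by
  refine ⟨fun j => wronskian u u' v v' ((d j + d (j + 1)) / 2), fun j hj x hx => ?_⟩
  have hdj : d j < d (j + 1) := hd (by simp; omega) (by simp; omega) (Nat.lt_succ_self j)
  have hcell : Ioo (d j) (d (j + 1)) ⊆ Ioo 0 π := by
    rw [← hd0, ← hdm]
    exact Ioo_subset_Ioo (hd.monotoneOn (by simp) (by simp; omega) (Nat.zero_le j))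
      (hd.monotoneOn (by simp; omega) (by simp) (by omega))
  have hp : IntegrableOn (fun x => (q x : ℂ) - lam) (Ioo (d j) (d (j + 1))) :=
    (hq.mono_set hcell).ofReal.sub (integrableOn_const measure_Ioo_lt_top.ne)
  exact (hu.isSolutionOn hj).wronskian_eq (hv.isSolutionOn hj) hp
    ⟨by linarith, by linarith⟩ hx

variable (hu : IsTransSol m d a b c q lam u u') (hv : IsTransSol m d a b c q lam v v')
  (hdmono : ∀ i < m, d i < d (i + 1)) {j : ℕ} {C : ℂ}
  (hC : EqOn (wronskian u u' v v') (fun _ => C) (Ioo (d j) (d (j + 1))))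
include hu hv hdmono hC

theorem IsTransSol.wronskian_left_eq (hj : j < m) : wronskian u u' v v' (d j) = C := by
  have hW : ContinuousWithinAt (wronskian u u' v v') (Ici (d j)) (d j) :=
    ((hu.2.2.1 j hj).1.mul (hv.2.2.1 j hj).2).sub ((hu.2.2.1 j hj).2.mul (hv.2.2.1 j hj).1)
  exact eq_of_tendsto_nhdsGT_of_eqOn (hdmono j hj) (hW.mono Ioi_subset_Ici_self) hC

theorem IsTransSol.wronskian_right_eq (hj : j + 1 = m) :
    wronskian u u' v v' (d (j + 1)) = C := by
  subst hj
  have hW : ContinuousWithinAt (wronskian u u' v v') (Iic (d (j + 1))) (d (j + 1)) :=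
    (hu.2.2.2.1.1.mul hv.2.2.2.1.2).sub (hu.2.2.2.1.2.mul hv.2.2.2.1.1)
  exact eq_of_tendsto_nhdsLT_of_eqOn (hdmono j (by omega)) (hW.mono Iio_subset_Iic_self) hC

theorem IsTransSol.wronskian_jump (hj : j + 1 < m) :
    wronskian u u' v v' (d (j + 1)) = a (j + 1) * b (j + 1) * C := by
  obtain ⟨ul, ul', hul, hul', hu0, hu0'⟩ := hu.2.2.2.2 (j + 1) (by omega) hj
  obtain ⟨vl, vl', hvl, hvl', hv0, hv0'⟩ := hv.2.2.2.2 (j + 1) (by omega) hj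
  have hlim : ul * vl' - ul' * vl = C :=
    eq_of_tendsto_nhdsLT_of_eqOn (hdmono j (by omega)) ((hul.mul hvl').sub (hul'.mul hvl)) hC
  rw [wronskian, hu0, hu0', hv0, hv0', ← hlim]
  ring

theorem IsTransSol.wronskian_eq_of_mem_Icc (hj : j < m) {x : ℝ}
    (hx : x ∈ Icc (d j) (d (j + 1))) (hxd : ∀ i, 1 ≤ i → i < m → x ≠ d i) :
    wronskian u u' v v' x = C := by
  rcases hx.1.eq_or_lt with rfl | hjx
  · exact hu.wronskian_left_eq hv hdmono hC hj
  rcases hx.2.eq_or_lt with rfl | hxj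
  · refine hu.wronskian_right_eq hv hdmono hC ?_
    by_contra hjm
    exact hxd (j + 1) (by omega) (by omega) rfl
  · exact hC ⟨hjx, hxj⟩

end Transmission

/-- If `u` and `v` are transmission solutions at the same spectral parameter
`λ ∈ ℂ`, then the modified Wronskian `x ↦ w x * (u x * v' x - u' x * v x)` takes the same
value at every point of `[0, π]` other than the transmission points `d 1, …, d (m-1)`. -/
theorem modified_wronskian_constant
    (m : ℕ) (d a b c : ℕ → ℝ) (q : ℝ → ℝ)
    (hm : 2 ≤ m) (hd0 : d 0 = 0) (hdm : d m = Real.pi)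
    (hdmono : ∀ i < m, d i < d (i + 1))
    (hab : ∀ i, 1 ≤ i → i < m → 0 < a i * b i)
    (hq : MeasureTheory.IntegrableOn q (Set.Ioo 0 Real.pi))
    (lam : ℂ) (u u' v v' : ℝ → ℂ)
    (hu : IsTransSol m d a b c q lam u u')
    (hv : IsTransSol m d a b c q lam v v') :
    ∃ W : ℂ, ∀ x ∈ Set.Icc (0 : ℝ) Real.pi, (∀ i, 1 ≤ i → i < m → x ≠ d i) →
      (wfun m d a b x : ℂ) * (u x * v' x - u' x * v x) = W := by
  have hd : StrictMonoOn d (Set.Iic m) :=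
    strictMonoOn_Iic_of_lt_succ fun i hi => by rw [Order.succ_eq_add_one]; exact hdmono i hi
  obtain ⟨C, hC⟩ := hu.exists_wronskian_eqOn hv hd hd0 hdm hq
  have hrec : ∀ i, i + 1 < m → C (i + 1) = a (i + 1) * b (i + 1) * C i := fun i hi =>
    (hu.wronskian_left_eq hv hdmono (hC (i + 1) hi) hi).symm.trans
      (hu.wronskian_jump hv hdmono (hC i (by omega)) hi)
  refine ⟨C 0, fun x hx hxd => ?_⟩
  obtain ⟨j, hj, hxj⟩ := exists_lt_mem_Icc_succ (by omega) (hd0 ▸ hdm ▸ hx)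
  rw [wfun_eq_prod hd hj hxj hxd, ← wronskian,
    hu.wronskian_eq_of_mem_Icc hv hdmono (hC j hj) hj hxj hxd]
  push_cast
  refine prod_Icc_inv_mul_eq_of_eq_mul (fun i h1 h2 => ?_) fun i hi => hrec i (by omega)
  exact_mod_cast (hab i h1 (by omega)).ne'
end
end

section
/- Every eigenvalue of the problem L is real, and every eigenvalue is simple in the following sense: if u and v are two nonzero transmission solutions at the same λ both satisfying the boundary conditions y'(0) + h y(0) = 0 and y'(π) + H y(π) = 0, then u and v are scalar multiples of each other. (This rests on the fact that a transmission solution is uniquely determined by the Cauchy data y(x₀±0) = f₀, y'(x₀±0) = f₁ at any point x₀ ∈ [0,π].) -/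
open MeasureTheory Set Filter Topology Finset
open scoped Real BigOperators ComplexConjugate

noncomputable section

/-- `lam` is an eigenvalue of the problem `L`: there is a nonzero transmission solution at `lam`
satisfying the Robin boundary conditions `y' 0 + h * y 0 = 0` and `y' π + H * y π = 0`. -/
def IsEigen (m : ℕ) (d a b c : ℕ → ℝ) (q : ℝ → ℝ) (h H : ℝ) (lam : ℂ) : Prop :=
  ∃ y y' : ℝ → ℂ, IsTransSol m d a b c q lam y y' ∧
    (∃ x ∈ Set.Icc (0 : ℝ) Real.pi, y x ≠ 0) ∧
    y' 0 + (h : ℂ) * y 0 = 0 ∧ y' Real.pi + (H : ℂ) * y Real.pi = 0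

/-!
Extended to the right end of each piece `[d j, d (j + 1)]` by its one-sided limits, a transmission
solution solves the integrated system `u = u (d j) + ∫ u₁`, `u₁ = u₁ (d j) + ∫ (q - λ) u`. Zero
Cauchy data force such a solution to vanish, by a Gronwall argument with the integrable kernel
`1 + |q - λ|`, and the transmission conditions pass zero data on to the next piece; so a
transmission solution with `y 0 = y' 0 = 0` vanishes identically. Simplicity follows by applying
this to `v - (v 0 / u 0) u`, the Robin condition at `0` forcing `u 0 ≠ 0`.

For realness, Lagrange's identity for `y` and `conj y` (integration by parts through Fubini, since
`u₁` is only absolutely continuous) shows that the flux `Im (y * conj y')` grows by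
`Im λ * ∫ |y|²` across each piece. The transmission conditions multiply the flux by `a i * b i > 0`,
the Robin conditions make it vanish at `0` and `π`, and `∫ |y|² > 0` on the first piece because
`y 0 ≠ 0`; hence `Im λ = 0`.
-/

open Function

section Primitive

variable {𝕜 : Type*} [RCLike 𝕜]

theorem setIntegral_mul_primitive_add_setIntegral_mul_primitive {s t : ℝ} {φ ψ : ℝ → 𝕜}
    (hφ : IntegrableOn φ (Ioc s t)) (hψ : IntegrableOn ψ (Ioc s t)) :
    ((∫ x in Ioc s t, φ x * ∫ y in Ioc s x, ψ y) + ∫ x in Ioc s t, ψ x * ∫ y in Ioc s x, φ y)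
      = (∫ x in Ioc s t, φ x) * ∫ x in Ioc s t, ψ x := by
  -- both sides integrate `φ x * ψ y` over the square, split along the diagonal
  set μ := volume.restrict (Ioc s t)
  set T : Set (ℝ × ℝ) := {p | p.2 ≤ p.1}
  have hT : MeasurableSet T := measurableSet_le measurable_snd measurable_fst
  have hprod : Integrable (fun p : ℝ × ℝ => φ p.1 * ψ p.2) (μ.prod μ) := hφ.mul_prod hψ
  have hlower : ∫ p in T, φ p.1 * ψ p.2 ∂(μ.prod μ)
      = ∫ x in Ioc s t, φ x * ∫ y in Ioc s x, ψ y := by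
    rw [← integral_indicator hT, integral_prod _ (hprod.indicator hT)]
    refine setIntegral_congr_fun measurableSet_Ioc fun x hx => ?_
    have hslice : Iic x ∩ Ioc s t = Ioc s x :=
      Set.ext fun z => ⟨fun hz => ⟨hz.2.1, hz.1⟩, fun hz => ⟨hz.2, hz.1, hz.2.trans hx.2⟩⟩
    calc ∫ y, T.indicator (fun p : ℝ × ℝ => φ p.1 * ψ p.2) (x, y) ∂μ
        = ∫ y, (Iic x).indicator (fun z => φ x * ψ z) y ∂μ := by
          congr 1
      _ = φ x * ∫ y in Ioc s x, ψ y := by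
          rw [integral_indicator measurableSet_Iic, Measure.restrict_restrict measurableSet_Iic,
            hslice, integral_const_mul]
  have hupper : ∫ p in Tᶜ, φ p.1 * ψ p.2 ∂(μ.prod μ)
      = ∫ y in Ioc s t, ψ y * ∫ x in Ioc s y, φ x := by
    rw [← integral_indicator hT.compl, integral_prod_symm _ (hprod.indicator hT.compl)]
    refine setIntegral_congr_fun measurableSet_Ioc fun y hy => ?_
    have hslice : Iio y ∩ Ioc s t = Ioo s y :=
      Set.ext fun z => ⟨fun hz => ⟨hz.2.1, hz.1⟩, fun hz => ⟨hz.2, hz.1, hz.2.le.trans hy.2⟩⟩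
    calc ∫ x, Tᶜ.indicator (fun p : ℝ × ℝ => φ p.1 * ψ p.2) (x, y) ∂μ
        = ∫ x, (Iio y).indicator (fun z => φ z * ψ y) x ∂μ := by
          congr 1; ext x; by_cases hxy : y ≤ x
          · simp [T, hxy, not_lt.2 hxy]
          · simp [T, hxy, not_le.1 hxy]
      _ = ψ y * ∫ x in Ioc s y, φ x := by
          rw [integral_indicator measurableSet_Iio, Measure.restrict_restrict measurableSet_Iio,
            hslice, setIntegral_congr_set Ioo_ae_eq_Ioc, integral_mul_const, mul_comm]
  rw [← hlower, ← hupper, integral_add_compl hT hprod, integral_prod_mul]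

theorem intervalIntegral_mul_primitive_add_intervalIntegral_mul_primitive {s t : ℝ} (hst : s ≤ t)
    {φ ψ : ℝ → 𝕜} (hφ : IntervalIntegrable φ volume s t) (hψ : IntervalIntegrable ψ volume s t) :
    ((∫ x in s..t, φ x * ∫ y in s..x, ψ y) + ∫ x in s..t, ψ x * ∫ y in s..x, φ y)
      = (∫ x in s..t, φ x) * ∫ x in s..t, ψ x := by
  have hprim : ∀ f g : ℝ → 𝕜, ∫ x in s..t, f x * ∫ y in s..x, g y
      = ∫ x in Ioc s t, f x * ∫ y in Ioc s x, g y := fun f g => by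
    rw [intervalIntegral.integral_of_le hst]
    exact setIntegral_congr_fun measurableSet_Ioc fun x hx => by
      rw [intervalIntegral.integral_of_le hx.1.le]
  rw [hprim, hprim, intervalIntegral.integral_of_le hst, intervalIntegral.integral_of_le hst]
  exact setIntegral_mul_primitive_add_setIntegral_mul_primitive hφ.1 hψ.1

theorem mul_sub_mul_eq_integral_of_eq_primitive {s t : ℝ} (hst : s ≤ t) {u v u₁ v₁ : ℝ → 𝕜}
    (hu₁ : IntervalIntegrable u₁ volume s t) (hv₁ : IntervalIntegrable v₁ volume s t)
    (hu : ∀ x ∈ Icc s t, u x = u s + ∫ y in s..x, u₁ y)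
    (hv : ∀ x ∈ Icc s t, v x = v s + ∫ y in s..x, v₁ y) :
    u t * v t - u s * v s = ∫ x in s..t, (u x * v₁ x + u₁ x * v x) := by
  have hIcc : uIcc s t = Icc s t := uIcc_of_le hst
  have hΦ : ContinuousOn (fun x => ∫ y in s..x, u₁ y) (uIcc s t) :=
    intervalIntegral.continuousOn_primitive_interval' hu₁ left_mem_uIcc
  have hΨ : ContinuousOn (fun x => ∫ y in s..x, v₁ y) (uIcc s t) :=
    intervalIntegral.continuousOn_primitive_interval' hv₁ left_mem_uIcc
  have hsplit : ∫ x in s..t, (u x * v₁ x + u₁ x * v x)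
      = ∫ x in s..t, ((u s * v₁ x + u₁ x * v s)
          + ((v₁ x * ∫ y in s..x, u₁ y) + u₁ x * ∫ y in s..x, v₁ y)) :=
    intervalIntegral.integral_congr fun x hx => by
      rw [hu x (hIcc ▸ hx), hv x (hIcc ▸ hx)]; ring
  rw [hsplit, intervalIntegral.integral_add ((hv₁.const_mul _).add (hu₁.mul_const _))
      ((hv₁.mul_continuousOn hΦ).add (hu₁.mul_continuousOn hΨ)),
    intervalIntegral.integral_add (hv₁.const_mul _) (hu₁.mul_const _),
    intervalIntegral.integral_add (hv₁.mul_continuousOn hΦ) (hu₁.mul_continuousOn hΨ),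
    intervalIntegral_mul_primitive_add_intervalIntegral_mul_primitive hst hv₁ hu₁,
    intervalIntegral.integral_const_mul, intervalIntegral.integral_mul_const,
    hu t (right_mem_Icc.2 hst), hv t (right_mem_Icc.2 hst)]
  ring

end Primitive

theorem integral_mul_eq_zero_of_le_integral_mul {x x' : ℝ} (hxx' : x ≤ x') {K g : ℝ → ℝ}
    (hK : IntervalIntegrable K volume x x') (hK0 : ∀ y, 0 ≤ K y) (hKx' : ∫ y in x..x', K y ≤ 1 / 2)
    (hg : ContinuousOn g (Icc x x')) (hg0 : ∀ y, 0 ≤ g y)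
    (hle : ∀ z ∈ Icc x x', g z ≤ ∫ y in x..z, K y * g y) :
    ∀ z ∈ Icc x x', ∫ y in x..z, K y * g y = 0 := by
  obtain ⟨xs, hxs, hmax⟩ := isCompact_Icc.exists_isMaxOn (nonempty_Icc.2 hxx') hg
  have hsub : ∀ z ∈ Icc x x', uIcc x z ⊆ uIcc x x' := fun z hz =>
    uIcc_subset_uIcc_left (by rw [uIcc_of_le hxx']; exact hz)
  have hKg : IntervalIntegrable (fun y => K y * g y) volume x x' :=
    hK.mul_continuousOn (uIcc_of_le hxx' ▸ hg)
  have hbound : ∀ z ∈ Icc x x', ∫ y in x..z, K y * g y ≤ g xs / 2 := fun z hz =>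
    calc ∫ y in x..z, K y * g y ≤ ∫ y in x..z, K y * g xs :=
          intervalIntegral.integral_mono_on hz.1 (hKg.mono_set (hsub z hz))
            ((hK.mono_set (hsub z hz)).mul_const _) fun y hy =>
              mul_le_mul_of_nonneg_left (hmax ⟨hy.1, hy.2.trans hz.2⟩) (hK0 y)
      _ = (∫ y in x..z, K y) * g xs := intervalIntegral.integral_mul_const _ _
      _ ≤ 1 / 2 * g xs := mul_le_mul_of_nonneg_right ((intervalIntegral.integral_mono_interval
            le_rfl hz.1 hz.2 (Eventually.of_forall hK0) hK).trans hKx') (hg0 xs)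
      _ = g xs / 2 := by ring
  -- the maximum of `g` on `[x, x']` is at most half of itself
  have hgxs : g xs ≤ 0 := by linarith [(hle xs hxs).trans (hbound xs hxs)]
  exact fun z hz => le_antisymm ((hbound z hz).trans (by linarith))
    (intervalIntegral.integral_nonneg hz.1 fun y _ => mul_nonneg (hK0 y) (hg0 y))

theorem eqOn_zero_of_le_integral_mul {α β : ℝ} {K g : ℝ → ℝ}
    (hK : IntervalIntegrable K volume α β) (hK0 : ∀ x, 0 ≤ K x)
    (hg : ContinuousOn g (Icc α β)) (hg0 : ∀ x, 0 ≤ g x)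
    (hle : ∀ x ∈ Icc α β, g x ≤ ∫ y in α..x, K y * g y) :
    ∀ x ∈ Icc α β, g x = 0 := by
  rcases lt_or_ge β α with hβα | hαβ
  · exact fun x hx => absurd (hx.1.trans hx.2) (not_le.2 hβα)
  have hI : uIcc α β = Icc α β := uIcc_of_le hαβ
  have hsub : ∀ {c d}, c ∈ Icc α β → d ∈ Icc α β → uIcc c d ⊆ uIcc α β := fun hc hd =>
    uIcc_subset_uIcc (hI ▸ hc) (hI ▸ hd)
  have hKg : IntervalIntegrable (fun y => K y * g y) volume α β := hK.mul_continuousOn (hI ▸ hg)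
  suffices hF : Icc α β ⊆ {x | ∫ y in α..x, K y * g y = 0} from fun x hx =>
    le_antisymm ((hle x hx).trans_eq (hF hx)) (hg0 x)
  refine IsClosed.Icc_subset_of_forall_mem_nhdsWithin ?_ intervalIntegral.integral_same ?_
  · rw [inter_comm]
    exact (hI ▸ intervalIntegral.continuousOn_primitive_interval' hKg left_mem_uIcc)
      |>.preimage_isClosed_of_isClosed isClosed_Icc isClosed_singleton
  rintro x ⟨hFx, hxα, hxβ⟩
  have hxI : x ∈ Icc α β := ⟨hxα, hxβ.le⟩
  have hKx : Tendsto (fun y => ∫ z in x..y, K z) (𝓝[>] x) (𝓝 0) := by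
    have h := (uIcc_of_le hxβ.le ▸ intervalIntegral.continuousOn_primitive_interval'
      (hK.mono_set (hsub hxI (right_mem_Icc.2 hαβ))) left_mem_uIcc) x (left_mem_Icc.2 hxβ.le)
    rw [ContinuousWithinAt, intervalIntegral.integral_same] at h
    exact h.mono_left (nhdsWithin_le_of_mem (Icc_mem_nhdsGT hxβ))
  obtain ⟨x', hKx', hx'⟩ := ((hKx.eventually (gt_mem_nhds (by norm_num : (0 : ℝ) < 1 / 2))).and
    (Ioc_mem_nhdsGT hxβ)).exists
  have hIcc : ∀ z ∈ Icc x x', z ∈ Icc α β := fun z hz => ⟨hxα.trans hz.1, hz.2.trans hx'.2⟩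
  have hFz : ∀ z ∈ Icc x x', ∫ y in α..z, K y * g y = ∫ y in x..z, K y * g y := fun z hz => by
    rw [← intervalIntegral.integral_add_adjacent_intervals (hKg.mono_set (hsub
      (left_mem_Icc.2 hαβ) hxI)) (hKg.mono_set (hsub hxI (hIcc z hz))), hFx.out, zero_add]
  have hzero := integral_mul_eq_zero_of_le_integral_mul hx'.1.le
    (hK.mono_set (hsub hxI (hIcc x' (right_mem_Icc.2 hx'.1.le)))) hK0 hKx'.le
    (hg.mono fun z hz => hIcc z hz) hg0 fun z hz => (hle z (hIcc z hz)).trans_eq (hFz z hz)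
  exact mem_of_superset (Icc_mem_nhdsGT hx'.1) fun z hz => (hFz z hz).trans (hzero z hz)

section OneSided

variable {E : Type*} [NormedAddCommGroup E] {α β : ℝ}

theorem continuousOn_update_of_tendsto {w : ℝ → E} {wl : E} (hw : ContinuousOn w (Ico α β))
    (hwl : Tendsto w (𝓝[<] β) (𝓝 wl)) : ContinuousOn (update w β wl) (Icc α β) :=
  continuousOn_update_iff.2 ⟨by rwa [Icc_sdiff_right], fun _ =>
    hwl.mono_left (nhdsWithin_mono _ (by rw [Icc_sdiff_right]; exact fun x hx => hx.2))⟩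

variable [NormedSpace ℝ E]

theorem update_eq_add_integral_of_sub_eq_integral (hαβ : α < β) {w f : ℝ → E} {wl : E}
    (hf : IntervalIntegrable f volume α β)
    (hrel : ∀ s ∈ Ioo α β, ∀ t ∈ Ioo α β, w t - w s = ∫ x in s..t, f x)
    (hα : ContinuousWithinAt w (Ici α) α) (hβ : Tendsto w (𝓝[<] β) (𝓝 wl)) :
    ∀ x ∈ Icc α β, update w β wl x = w α + ∫ y in α..x, f y := by
  set R := fun x => w α + ∫ y in α..x, f y
  have hR : ContinuousOn R (Icc α β) := continuousOn_const.add
    (uIcc_of_le hαβ.le ▸ intervalIntegral.continuousOn_primitive_interval' hf left_mem_uIcc)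
  have hsub : ∀ {c}, c ∈ Icc α β → uIcc α c ⊆ uIcc α β := fun hc =>
    uIcc_subset_uIcc_left (by rw [uIcc_of_le hαβ.le]; exact hc)
  have hIco : ∀ x ∈ Ico α β, w x = R x := by
    rintro x ⟨hαx, hxβ⟩
    rcases hαx.eq_or_lt with rfl | hαx
    · simp [R]
    have hlim : Tendsto (fun s => R x - R s) (𝓝[>] α) (𝓝 (R x - R α)) :=
      tendsto_const_nhds.sub ((hR α (left_mem_Icc.2 hαβ.le)).mono_of_mem_nhdsWithin
        (Icc_mem_nhdsGT hαβ))
    have heq : (fun s => w x - w s) =ᶠ[𝓝[>] α] fun s => R x - R s :=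
      eventually_of_mem (Ioo_mem_nhdsGT hαβ) fun s hs => by
        simp only [R]
        rw [hrel s hs x ⟨hαx, hxβ⟩, add_sub_add_left_eq_sub,
          intervalIntegral.integral_interval_sub_left (hf.mono_set (hsub ⟨hαx.le, hxβ.le⟩))
            (hf.mono_set (hsub ⟨hs.1.le, hs.2.le⟩))]
    have := tendsto_nhds_unique ((tendsto_const_nhds.sub (hα.mono_left (nhdsWithin_mono _
      Ioi_subset_Ici_self))).congr' heq) hlim
    simp only [R, intervalIntegral.integral_same, add_zero, add_sub_cancel_left] at this
    exact eq_add_of_sub_eq' this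
  have hwl : wl = R β := tendsto_nhds_unique hβ <|
    ((hR β (right_mem_Icc.2 hαβ.le)).mono_of_mem_nhdsWithin (Icc_mem_nhdsLT hαβ)).congr'
      (eventually_of_mem (Ico_mem_nhdsLT hαβ) fun x hx => (hIco x hx).symm)
  intro x hx
  rcases hx.2.lt_or_eq with hxβ | rfl
  · rw [update_of_ne hxβ.ne]; exact hIco x ⟨hx.1, hxβ⟩
  · rw [update_self]; exact hwl

end OneSided

theorem IntervalIntegrable.ofReal_sub {q : ℝ → ℝ} {α β : ℝ} (hq : IntervalIntegrable q volume α β)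
    (lam : ℂ) : IntervalIntegrable (fun x => (q x : ℂ) - lam) volume α β :=
  (show IntervalIntegrable (fun x => (q x : ℂ)) volume α β from ⟨hq.1.ofReal, hq.2.ofReal⟩).sub
    intervalIntegrable_const

/-- `u₁` stands for `u'`: as in `IsTransSol`, the equation `-u'' + q u = λ u` on `[α, β]` is imposed
in integrated form. -/
structure IsSolOn (q : ℝ → ℝ) (lam : ℂ) (α β : ℝ) (u u₁ : ℝ → ℂ) : Prop where
  continuousOn : ContinuousOn u (Icc α β)
  continuousOn_deriv : ContinuousOn u₁ (Icc α β)
  eq_add_integral : ∀ x ∈ Icc α β, u x = u α + ∫ y in α..x, u₁ y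
  deriv_eq_add_integral : ∀ x ∈ Icc α β, u₁ x = u₁ α + ∫ y in α..x, ((q y : ℂ) - lam) * u y

namespace IsSolOn

variable {q : ℝ → ℝ} {lam mu : ℂ} {α β : ℝ} {u u₁ v v₁ : ℝ → ℂ}

theorem intervalIntegrable_mul (hu : IsSolOn q lam α β u u₁) (hαβ : α ≤ β)
    (hq : IntervalIntegrable q volume α β) :
    IntervalIntegrable (fun x => ((q x : ℂ) - lam) * u x) volume α β :=
  (hq.ofReal_sub lam).mul_continuousOn (uIcc_of_le hαβ ▸ hu.continuousOn)

theorem intervalIntegrable_deriv (hu : IsSolOn q lam α β u u₁) (hαβ : α ≤ β) :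
    IntervalIntegrable u₁ volume α β :=
  (uIcc_of_le hαβ ▸ hu.continuousOn_deriv).intervalIntegrable

theorem star (hu : IsSolOn q lam α β u u₁) :
    IsSolOn q (conj lam) α β (fun x => conj (u x)) (fun x => conj (u₁ x)) where
  continuousOn := hu.continuousOn.star
  continuousOn_deriv := hu.continuousOn_deriv.star
  eq_add_integral x hx := by
    rw [hu.eq_add_integral x hx, map_add, intervalIntegral.intervalIntegral_conj]
  deriv_eq_add_integral x hx := by
    rw [hu.deriv_eq_add_integral x hx, map_add, ← intervalIntegral.intervalIntegral_conj]
    simp only [map_mul, map_sub, Complex.conj_ofReal]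

theorem wronskian_sub (hu : IsSolOn q lam α β u u₁) (hv : IsSolOn q mu α β v v₁) (hαβ : α ≤ β)
    (hq : IntervalIntegrable q volume α β) :
    (u β * v₁ β - u₁ β * v β) - (u α * v₁ α - u₁ α * v α)
      = (lam - mu) * ∫ x in α..β, u x * v x := by
  have hfu := hu.intervalIntegrable_mul hαβ hq
  have hfv := hv.intervalIntegrable_mul hαβ hq
  have huv₁ := mul_sub_mul_eq_integral_of_eq_primitive hαβ (hu.intervalIntegrable_deriv hαβ) hfv
    hu.eq_add_integral hv.deriv_eq_add_integral
  have hu₁v := mul_sub_mul_eq_integral_of_eq_primitive hαβ hfu (hv.intervalIntegrable_deriv hαβ)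
    hu.deriv_eq_add_integral hv.eq_add_integral
  have hIcc : uIcc α β = Icc α β := uIcc_of_le hαβ
  rw [← intervalIntegral.integral_const_mul, sub_sub_sub_comm, huv₁, hu₁v,
    ← intervalIntegral.integral_sub]
  · exact intervalIntegral.integral_congr fun x _ => by ring
  · exact (hfv.continuousOn_mul (hIcc ▸ hu.continuousOn)).add
      ((hv.intervalIntegrable_deriv hαβ).continuousOn_mul (hIcc ▸ hu.continuousOn_deriv))
  · exact (hv.intervalIntegrable_deriv hαβ |>.continuousOn_mul (hIcc ▸ hu.continuousOn_deriv)).add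
      (hfu.mul_continuousOn (hIcc ▸ hv.continuousOn))

theorem im_mul_conj_sub (hu : IsSolOn q lam α β u u₁) (hαβ : α ≤ β)
    (hq : IntervalIntegrable q volume α β) :
    (u β * conj (u₁ β)).im - (u α * conj (u₁ α)).im = lam.im * ∫ x in α..β, ‖u x‖ ^ 2 := by
  have h := congrArg Complex.im (hu.wronskian_sub hu.star hαβ hq)
  simp only [Complex.mul_conj', ← Complex.ofReal_pow, intervalIntegral.integral_ofReal] at h
  simp only [Complex.sub_im, Complex.mul_im, Complex.conj_re, Complex.conj_im, Complex.ofReal_re,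
    Complex.ofReal_im, Complex.sub_re] at h ⊢
  linarith

theorem eq_zero_of_initial (hu : IsSolOn q lam α β u u₁) (hαβ : α ≤ β)
    (hq : IntervalIntegrable q volume α β) (h0 : u α = 0) (h₁0 : u₁ α = 0) :
    ∀ x ∈ Icc α β, u x = 0 ∧ u₁ x = 0 := by
  set K := fun x => 1 + ‖(q x : ℂ) - lam‖
  set g := fun x => ‖u x‖ + ‖u₁ x‖
  have hK : IntervalIntegrable K volume α β := intervalIntegrable_const.add (hq.ofReal_sub lam).norm
  have hgc : ContinuousOn g (Icc α β) := hu.continuousOn.norm.add hu.continuousOn_deriv.norm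
  have hsub : ∀ x ∈ Icc α β, uIcc α x ⊆ uIcc α β := fun x hx =>
    uIcc_subset_uIcc_left (by rw [uIcc_of_le hαβ]; exact hx)
  have hle : ∀ x ∈ Icc α β, g x ≤ ∫ y in α..x, K y * g y := by
    intro x hx
    have hf := (hu.intervalIntegrable_mul hαβ hq).mono_set (hsub x hx)
    have hu₁ := (hu.intervalIntegrable_deriv hαβ).mono_set (hsub x hx)
    calc g x ≤ (∫ y in α..x, ‖u₁ y‖) + ∫ y in α..x, ‖((q y : ℂ) - lam) * u y‖ := by
          rw [show g x = ‖u x‖ + ‖u₁ x‖ from rfl, hu.eq_add_integral x hx,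
            hu.deriv_eq_add_integral x hx, h0, h₁0, zero_add, zero_add]
          exact add_le_add (intervalIntegral.norm_integral_le_integral_norm hx.1)
            (intervalIntegral.norm_integral_le_integral_norm hx.1)
      _ = ∫ y in α..x, (‖u₁ y‖ + ‖((q y : ℂ) - lam) * u y‖) :=
          (intervalIntegral.integral_add hu₁.norm hf.norm).symm
      _ ≤ ∫ y in α..x, K y * g y := by
          refine intervalIntegral.integral_mono_on hx.1 (hu₁.norm.add hf.norm)
            ((hK.mono_set (hsub x hx)).mul_continuousOn ?_) fun y _ => ?_
          · exact hgc.mono (by rw [uIcc_of_le hx.1]; exact Icc_subset_Icc_right hx.2)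
          · rw [norm_mul]
            nlinarith [norm_nonneg (u y), norm_nonneg (u₁ y), norm_nonneg ((q y : ℂ) - lam)]
  intro x hx
  have := eqOn_zero_of_le_integral_mul hK (fun x => by positivity) hgc
    (fun x => add_nonneg (norm_nonneg _) (norm_nonneg _)) hle x hx
  exact ⟨norm_eq_zero.1 (by linarith [norm_nonneg (u x), norm_nonneg (u₁ x)]),
    norm_eq_zero.1 (by linarith [norm_nonneg (u x), norm_nonneg (u₁ x)])⟩

theorem update_of_Ioo (hαβ : α < β) (hq : IntervalIntegrable q volume α β) {ul ul₁ : ℂ}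
    (hud : ∀ x ∈ Ioo α β, HasDerivAt u (u₁ x) x)
    (hu₁ : ∀ s ∈ Ioo α β, ∀ t ∈ Ioo α β, u₁ t - u₁ s = ∫ x in s..t, ((q x : ℂ) - lam) * u x)
    (huα : ContinuousWithinAt u (Ici α) α) (hu₁α : ContinuousWithinAt u₁ (Ici α) α)
    (huβ : Tendsto u (𝓝[<] β) (𝓝 ul)) (hu₁β : Tendsto u₁ (𝓝[<] β) (𝓝 ul₁)) :
    IsSolOn q lam α β (update u β ul) (update u₁ β ul₁) := by
  have hIcc : uIcc α β = Icc α β := uIcc_of_le hαβ.le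
  have hu : ContinuousOn u (Ico α β) := by
    rintro x ⟨hαx, hxβ⟩
    rcases hαx.eq_or_lt with rfl | hαx
    · exact huα.mono Ico_subset_Ici_self
    · exact (hud x ⟨hαx, hxβ⟩).continuousAt.continuousWithinAt
  have hUc := continuousOn_update_of_tendsto hu huβ
  have hf := hq.ofReal_sub lam |>.mul_continuousOn (hIcc ▸ hUc)
  have hU₁ := update_eq_add_integral_of_sub_eq_integral hαβ hf (fun s hs t ht => by
    rw [hu₁ s hs t ht]
    refine intervalIntegral.integral_congr fun x hx => ?_
    simp only [update_of_ne (hx.2.trans_lt (max_lt hs.2 ht.2)).ne]) hu₁α hu₁β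
  have hU₁α : update u₁ β ul₁ α = u₁ α := update_of_ne hαβ.ne _ _
  have hU₁c : ContinuousOn (update u₁ β ul₁) (Icc α β) :=
    (continuousOn_const.add (hIcc ▸ intervalIntegral.continuousOn_primitive_interval' hf
      left_mem_uIcc)).congr hU₁
  refine ⟨hUc, hU₁c, fun x hx => ?_, fun x hx => by rw [hU₁ x hx, hU₁α]⟩
  have hderiv : ∀ z ∈ Ioo α x, HasDerivWithinAt (update u β ul) (update u₁ β ul₁ z) (Ioi z) z := by
    intro z hz
    have hzβ : z ≠ β := (hz.2.trans_le hx.2).ne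
    rw [update_of_ne hzβ]
    exact ((hud z ⟨hz.1, hz.2.trans_le hx.2⟩).congr_of_eventuallyEq
      (eventually_ne_nhds hzβ |>.mono fun y hy => update_of_ne hy _ _)).hasDerivWithinAt
  have hsub : Icc α x ⊆ Icc α β := Icc_subset_Icc_right hx.2
  rw [intervalIntegral.integral_eq_sub_of_hasDeriv_right_of_le hx.1 (hUc.mono hsub) hderiv
    ((hU₁c.mono hsub).intervalIntegrable_of_Icc hx.1)]
  abel

end IsSolOn

theorem im_mul_conj_eq_zero_of_add_mul_eq_zero {h : ℝ} {p p' : ℂ} (hbc : p' + h * p = 0) :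
    (p * conj p').im = 0 := by
  rw [eq_neg_of_add_eq_zero_left hbc, map_neg, map_mul, Complex.conj_ofReal, mul_neg,
    mul_left_comm, Complex.mul_conj, ← Complex.ofReal_mul, Complex.neg_im, Complex.ofReal_im,
    neg_zero]

theorem im_mul_conj_transmission (a b c : ℝ) (p p' : ℂ) :
    ((a : ℂ) * p * conj ((b : ℂ) * p' + (c : ℂ) * p)).im = a * b * (p * conj p').im := by
  simp only [map_add, map_mul, Complex.conj_ofReal, Complex.mul_im, Complex.add_re,
    Complex.add_im, Complex.mul_re, Complex.ofReal_re, Complex.ofReal_im, Complex.conj_re,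
    Complex.conj_im]
  ring

theorem eq_zero_of_flux_balance {m : ℕ} (hm : 1 ≤ m) {θ : ℝ} {r e l I : ℕ → ℝ}
    (hr : ∀ k, 1 ≤ k → k < m → 0 < r k) (hI : ∀ j < m, 0 ≤ I j) (hI0 : 0 < I 0)
    (hstep : ∀ j < m, l j - e j = θ * I j) (hjump : ∀ j, j + 1 < m → e (j + 1) = r (j + 1) * l j)
    (he0 : e 0 = 0) (hl : l (m - 1) = 0) : θ = 0 := by
  by_contra hθ
  have hpos : ∀ k < m, 0 < θ * l k := by
    intro k hk
    induction k with
    | zero =>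
      have h0 := hstep 0 hk
      rw [he0, sub_zero] at h0
      rw [h0, ← mul_assoc]
      exact mul_pos (mul_self_pos.2 hθ) hI0
    | succ k ih =>
      have hstep' : θ * l (k + 1) = r (k + 1) * (θ * l k) + θ * θ * I (k + 1) := by
        linear_combination θ * hstep (k + 1) hk + θ * hjump k hk
      rw [hstep']
      exact add_pos_of_pos_of_nonneg (mul_pos (hr _ (by omega) hk) (ih (by omega)))
        (mul_nonneg (mul_self_nonneg θ) (hI _ hk))
  simpa [hl] using hpos (m - 1) (by omega)

namespace IsTransSol

variable {m : ℕ} {d a b c : ℕ → ℝ} {q : ℝ → ℝ} {lam : ℂ} {y y' : ℝ → ℂ}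

theorem exists_isSolOn (hsol : IsTransSol m d a b c q lam y y') {j : ℕ} (hj : j < m)
    (hd : d j < d (j + 1)) (hq : IntervalIntegrable q volume (d j) (d (j + 1))) :
    ∃ yl yl' : ℂ, IsSolOn q lam (d j) (d (j + 1)) (update y (d (j + 1)) yl)
        (update y' (d (j + 1)) yl') ∧
      (j + 1 < m → y (d (j + 1)) = a (j + 1) * yl ∧
        y' (d (j + 1)) = b (j + 1) * yl' + c (j + 1) * yl) ∧
      (j + 1 = m → yl = y (d m) ∧ yl' = y' (d m)) := by
  obtain ⟨hderiv, hrel, hright, hleft, hjump⟩ := hsol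
  obtain ⟨yl, yl', hyl, hyl', hend⟩ : ∃ yl yl' : ℂ, Tendsto y (𝓝[<] d (j + 1)) (𝓝 yl) ∧
      Tendsto y' (𝓝[<] d (j + 1)) (𝓝 yl') ∧
      (j + 1 < m → y (d (j + 1)) = a (j + 1) * yl ∧
        y' (d (j + 1)) = b (j + 1) * yl' + c (j + 1) * yl) ∧
      (j + 1 = m → yl = y (d m) ∧ yl' = y' (d m)) := by
    rcases (show j + 1 ≤ m from hj).lt_or_eq with hlt | heq
    · obtain ⟨yl, yl', hyl, hyl', hy, hy'⟩ := hjump (j + 1) (by omega) hlt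
      exact ⟨yl, yl', hyl, hyl', fun _ => ⟨hy, hy'⟩, fun h => absurd h hlt.ne⟩
    · rw [heq]
      exact ⟨y (d m), y' (d m), hleft.1.mono_left (nhdsWithin_mono _ Iio_subset_Iic_self),
        hleft.2.mono_left (nhdsWithin_mono _ Iio_subset_Iic_self), fun h => absurd h (by omega),
        fun _ => ⟨rfl, rfl⟩⟩
  exact ⟨yl, yl', IsSolOn.update_of_Ioo hd hq (hderiv j hj) (hrel j hj) (hright j hj).1
    (hright j hj).2 hyl hyl', hend⟩

theorem sub_const_mul {u u' v v' : ℝ → ℂ}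
    (hq : ∀ j < m, IntervalIntegrable q volume (d j) (d (j + 1)))
    (hu : IsTransSol m d a b c q lam u u') (hv : IsTransSol m d a b c q lam v v') (κ : ℂ) :
    IsTransSol m d a b c q lam (fun x => v x - κ * u x) (fun x => v' x - κ * u' x) := by
  obtain ⟨hud, hurel, huα, huπ, hujump⟩ := hu
  obtain ⟨hvd, hvrel, hvα, hvπ, hvjump⟩ := hv
  refine ⟨fun j hj x hx => (hvd j hj x hx).sub ((hud j hj x hx).const_mul κ), ?_,
    fun j hj => ⟨(hvα j hj).1.sub (continuousWithinAt_const.mul (huα j hj).1),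
      (hvα j hj).2.sub (continuousWithinAt_const.mul (huα j hj).2)⟩,
    ⟨hvπ.1.sub (continuousWithinAt_const.mul huπ.1),
      hvπ.2.sub (continuousWithinAt_const.mul huπ.2)⟩, ?_⟩
  · intro j hj s hs t ht
    have hst : uIcc s t ⊆ Ioo (d j) (d (j + 1)) := ordConnected_Ioo.uIcc_subset hs ht
    have hsub : uIcc s t ⊆ uIcc (d j) (d (j + 1)) := hst.trans
      (Ioo_subset_Icc_self.trans_eq (uIcc_of_le (hs.1.trans hs.2).le).symm)
    have hint : ∀ w : ℝ → ℂ, (∀ x ∈ Ioo (d j) (d (j + 1)), ContinuousAt w x) →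
        IntervalIntegrable (fun x => ((q x : ℂ) - lam) * w x) volume s t := fun w hw =>
      ((hq j hj).ofReal_sub lam |>.mono_set hsub).mul_continuousOn
        fun x hx => (hw x (hst hx)).continuousWithinAt
    rw [intervalIntegral.integral_congr (g := fun x => ((q x : ℂ) - lam) * v x
        - κ * (((q x : ℂ) - lam) * u x)) (fun x _ => by ring),
      intervalIntegral.integral_sub (hint v fun x hx => (hvd j hj x hx).continuousAt)
        ((hint u fun x hx => (hud j hj x hx).continuousAt).const_mul κ),
      intervalIntegral.integral_const_mul, ← hvrel j hj s hs t ht, ← hurel j hj s hs t ht]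
    ring
  · intro i h1i him
    obtain ⟨ul, ul', hul, hul', hu, hu'⟩ := hujump i h1i him
    obtain ⟨vl, vl', hvl, hvl', hv, hv'⟩ := hvjump i h1i him
    refine ⟨vl - κ * ul, vl' - κ * ul', hvl.sub (hul.const_mul κ), hvl'.sub (hul'.const_mul κ),
      ?_, ?_⟩
    · simp only [hu, hv]; ring
    · simp only [hu', hv']; ring

theorem eq_zero_of_initial (hsol : IsTransSol m d a b c q lam y y')
    (hd : ∀ i < m, d i < d (i + 1)) (hq : ∀ j < m, IntervalIntegrable q volume (d j) (d (j + 1)))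
    (h0 : y (d 0) = 0) (h0' : y' (d 0) = 0) : ∀ x ∈ Icc (d 0) (d m), y x = 0 := by
  suffices key : ∀ k ≤ m, y (d k) = 0 ∧ y' (d k) = 0 ∧ ∀ x ∈ Icc (d 0) (d k), y x = 0 from
    (key m le_rfl).2.2
  intro k
  induction k with
  | zero => exact fun _ => ⟨h0, h0', fun x hx => (le_antisymm hx.2 hx.1).symm ▸ h0⟩
  | succ k ih =>
    intro hk
    obtain ⟨hyk, hy'k, hbelow⟩ := ih (by omega)
    obtain ⟨yl, yl', hs, hjump, hend⟩ := hsol.exists_isSolOn hk (hd k hk) (hq k hk)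
    have hne : d k ≠ d (k + 1) := (hd k hk).ne
    have hzero := hs.eq_zero_of_initial (hd k hk).le (hq k hk)
      (by rw [update_of_ne hne, hyk]) (by rw [update_of_ne hne, hy'k])
    have hyl : yl = 0 := by simpa using (hzero _ (right_mem_Icc.2 (hd k hk).le)).1
    have hyl' : yl' = 0 := by simpa using (hzero _ (right_mem_Icc.2 (hd k hk).le)).2
    have hend' : y (d (k + 1)) = 0 ∧ y' (d (k + 1)) = 0 := by
      rcases hk.lt_or_eq with hlt | heq
      · obtain ⟨h1, h2⟩ := hjump hlt
        simp [h1, h2, hyl, hyl']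
      · obtain ⟨h1, h2⟩ := hend heq
        rw [heq, ← h1, ← h2]
        exact ⟨hyl, hyl'⟩
    refine ⟨hend'.1, hend'.2, fun x hx => ?_⟩
    rcases le_or_gt x (d k) with hxk | hxk
    · exact hbelow x ⟨hx.1, hxk⟩
    rcases hx.2.lt_or_eq with hxk' | rfl
    · simpa [update_of_ne hxk'.ne] using (hzero x ⟨hxk.le, hxk'.le⟩).1
    · exact hend'.1

theorem apply_ne_zero_of_robin (hsol : IsTransSol m d a b c q lam y y')
    (hd : ∀ i < m, d i < d (i + 1)) (hq : ∀ j < m, IntervalIntegrable q volume (d j) (d (j + 1)))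
    {h : ℝ} (hne : ∃ x ∈ Icc (d 0) (d m), y x ≠ 0) (hbc : y' (d 0) + h * y (d 0) = 0) :
    y (d 0) ≠ 0 := by
  intro h0
  obtain ⟨x, hx, hyx⟩ := hne
  exact hyx (hsol.eq_zero_of_initial hd hq h0 (by simpa [h0] using hbc) x hx)

theorem im_eq_zero (hsol : IsTransSol m d a b c q lam y y') (hm : 1 ≤ m)
    (hd : ∀ i < m, d i < d (i + 1)) (hab : ∀ i, 1 ≤ i → i < m → 0 < a i * b i)
    (hq : ∀ j < m, IntervalIntegrable q volume (d j) (d (j + 1))) (hy0 : y (d 0) ≠ 0)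
    (hflux0 : (y (d 0) * conj (y' (d 0))).im = 0) (hfluxm : (y (d m) * conj (y' (d m))).im = 0) :
    lam.im = 0 := by
  choose! yl yl' hs hjump hend using fun j (hj : j < m) =>
    hsol.exists_isSolOn hj (hd j hj) (hq j hj)
  set U := fun j => update y (d (j + 1)) (yl j)
  -- `e j` is the flux at the left end of the `j`-th piece, `l j` its left limit at the right end
  refine eq_zero_of_flux_balance hm (r := fun k => a k * b k) hab
    (I := fun j => ∫ x in d j..d (j + 1), ‖U j x‖ ^ 2)
    (e := fun j => (y (d j) * conj (y' (d j))).im) (l := fun j => (yl j * conj (yl' j)).im)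
    (fun j hj => ?_) ?_ (fun j hj => ?_) (fun j hj => ?_) hflux0 ?_
  · exact intervalIntegral.integral_nonneg (hd j hj).le fun x _ => by positivity
  · have h01 := hd 0 (by omega)
    refine intervalIntegral.integral_pos h01 ((hs 0 (by omega)).continuousOn.norm.pow 2)
      (fun x _ => by positivity) ⟨d 0, left_mem_Icc.2 h01.le, ?_⟩
    simpa [U, update_of_ne h01.ne] using pow_pos (norm_pos_iff.2 hy0) 2
  · have := (hs j hj).im_mul_conj_sub (hd j hj).le (hq j hj)
    simpa [update_of_ne (hd j hj).ne] using this
  · obtain ⟨h1, h2⟩ := hjump j (by omega) hj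
    simp only [h1, h2]
    exact im_mul_conj_transmission _ _ _ _ _
  · obtain ⟨h1, h2⟩ := hend (m - 1) (by omega) (by omega)
    simp only [h1, h2]
    simpa [show m - 1 + 1 = m by omega] using hfluxm

end IsTransSol

/-- Every eigenvalue of the problem `L` is real, and every eigenvalue is
simple: two nonzero transmission solutions at the same `lam` satisfying both boundary
conditions are scalar multiples of each other. -/
theorem eigenvalues_real_and_simple
    (m : ℕ) (d a b c : ℕ → ℝ) (q : ℝ → ℝ) (h H : ℝ)
    (hm : 2 ≤ m)
    (hd0 : d 0 = 0) (hdm : d m = Real.pi)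
    (hdmono : ∀ i < m, d i < d (i + 1))
    (hab : ∀ i, 1 ≤ i → i < m → 0 < a i * b i)
    (hq : MeasureTheory.IntegrableOn q (Set.Ioo 0 Real.pi)) :
    (∀ lam : ℂ, IsEigen m d a b c q h H lam → lam.im = 0) ∧
    (∀ (lam : ℂ) (u u' v v' : ℝ → ℂ),
      IsTransSol m d a b c q lam u u' → IsTransSol m d a b c q lam v v' →
      (∃ x ∈ Set.Icc (0 : ℝ) Real.pi, u x ≠ 0) → (∃ x ∈ Set.Icc (0 : ℝ) Real.pi, v x ≠ 0) →
      u' 0 + (h : ℂ) * u 0 = 0 → u' Real.pi + (H : ℂ) * u Real.pi = 0 →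
      v' 0 + (h : ℂ) * v 0 = 0 → v' Real.pi + (H : ℂ) * v Real.pi = 0 →
      ∃ cst : ℂ, ∀ x ∈ Set.Icc (0 : ℝ) Real.pi, v x = cst * u x) := by
  have hmono : MonotoneOn d (Set.Iic m) :=
    (strictMonoOn_Iic_of_lt_succ fun i hi => by simpa using hdmono i hi).monotoneOn
  have hq' : ∀ j < m, IntervalIntegrable q volume (d j) (d (j + 1)) := fun j hj =>
    (intervalIntegrable_iff_integrableOn_Ioc_of_le (hdmono j hj).le).2 <|
      ((integrableOn_Ioc_iff_integrableOn_Ioo (f := q) (μ := volume)).2 hq).mono_set <|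
        Ioc_subset_Ioc (hd0 ▸ hmono (Set.mem_Iic.2 m.zero_le) (Set.mem_Iic.2 hj.le) j.zero_le)
          (hdm ▸ hmono (Set.mem_Iic.2 hj) (Set.mem_Iic.2 le_rfl) hj)
  constructor
  · rintro lam ⟨y, y', hsol, hne, hbc0, hbcπ⟩
    rw [← hd0] at hne hbc0
    rw [← hdm] at hne hbcπ
    exact hsol.im_eq_zero (by omega) hdmono hab hq'
      (hsol.apply_ne_zero_of_robin hdmono hq' hne hbc0)
      (im_mul_conj_eq_zero_of_add_mul_eq_zero hbc0) (im_mul_conj_eq_zero_of_add_mul_eq_zero hbcπ)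
  · intro lam u u' v v' hu hv hne _ hu0 _ hv0 _
    rw [← hd0, ← hdm] at hne ⊢
    rw [← hd0] at hu0 hv0
    have hκ : v (d 0) / u (d 0) * u (d 0) = v (d 0) :=
      div_mul_cancel₀ _ (hu.apply_ne_zero_of_robin hdmono hq' hne hu0)
    refine ⟨v (d 0) / u (d 0), fun x hx => ?_⟩
    have := (hu.sub_const_mul hq' hv (v (d 0) / u (d 0))).eq_zero_of_initial hdmono hq'
      (by linear_combination -hκ) (by linear_combination hv0 - v (d 0) / u (d 0) * hu0 + h * hκ)
      x hx
    linear_combination this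
end
end

section
/- For any two functions f, g such that f, f', g, g' are absolutely continuous on each subinterval (d_i,d_{i+1}), f and g satisfy the transmission conditions at each d_i, and −f'' + qf, −g'' + qg ∈ L²(0,π), the following Green identity holds: ∫₀^π (−f'' + q f) ḡ w dx + (w(0)/r₁) R₁'(f) conj(R₁(g)) + (w(π)/r₂) R₂'(f) conj(R₂(g)) = ∫₀^π f conj(−g'' + q g) w dx + (w(0)/r₁) R₁(f) conj(R₁'(g)) + (w(π)/r₂) R₂(f) conj(R₂'(g)); that is, the operator A(f, R₁(f), R₂(f)) = (−f''+qf, R₁'(f), R₂'(f)) is symmetric in the Hilbert space H = L²((0,π); w dx) ⊕ ℂ² with inner product ⟨F,G⟩ = ∫₀^π f ḡ w dx + (w(0)/r₁) f₁ ḡ₁ + (w(π)/r₂) f₂ ḡ₂. -/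
open MeasureTheory Set Filter Topology Finset
open scoped Real BigOperators ComplexConjugate

noncomputable section

/-- Membership in the domain conditions (without boundary conditions): `f`, `f'` absolutely
continuous on each subinterval (`f''` the a.e. second derivative, in integrated form), the
transmission conditions hold, and `-f'' + q f ∈ L²(0,π)`. -/
def InDomainTrans (m : ℕ) (d a b c : ℕ → ℝ) (q : ℝ → ℝ) (f f' f'' : ℝ → ℂ) : Prop :=
  (∀ j < m, ∀ x ∈ Set.Ioo (d j) (d (j + 1)), HasDerivAt f (f' x) x) ∧
  (∀ j < m, ∀ s ∈ Set.Ioo (d j) (d (j + 1)), ∀ t ∈ Set.Ioo (d j) (d (j + 1)),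
      f' t - f' s = ∫ x in s..t, f'' x) ∧
  (∀ j < m, ContinuousWithinAt f (Set.Ici (d j)) (d j) ∧
      ContinuousWithinAt f' (Set.Ici (d j)) (d j)) ∧
  (ContinuousWithinAt f (Set.Iic (d m)) (d m) ∧ ContinuousWithinAt f' (Set.Iic (d m)) (d m)) ∧
  (∀ i, 1 ≤ i → i < m → ∃ yl yl' : ℂ,
      Filter.Tendsto f (nhdsWithin (d i) (Set.Iio (d i))) (nhds yl) ∧
      Filter.Tendsto f' (nhdsWithin (d i) (Set.Iio (d i))) (nhds yl') ∧
      f (d i) = (a i : ℂ) * yl ∧ f' (d i) = (b i : ℂ) * yl' + (c i : ℂ) * yl) ∧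
  MemLp (fun x => -f'' x + (q x : ℂ) * f x) 2 (volume.restrict (Set.Ioo 0 Real.pi))

/-!
On each subinterval `(d j, d (j + 1))` the two integrands differ pointwise by `f ḡ'' - f'' ḡ`
(the `q`-terms cancel since `q` is real). Integrating by parts, this integrates to the jump of the
Lagrange bracket `[f, g] = f ḡ' - f' ḡ` between the one-sided limits at the endpoints; because `f'`
and `g'` are only absolutely continuous, the integration by parts goes through Fubini, and the
endpoints are reached by letting a compact subinterval exhaust the open one.

The weight is constant on each subinterval and gets divided by `a i * b i` across `d i`, while the
transmission conditions multiply the bracket by the determinant `a i * b i` of the real matrix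
`!![a i, 0; c i, b i]`. So `w [f, g]` has no jumps, and the interior contributions telescope to
`w(π) [f, g](π) - w(0) [f, g](0)`. Finally `R₁'(f) conj R₁(g) - R₁(f) conj R₁'(g) = r₁ [f, g](0)`
and `R₂'(f) conj R₂(g) - R₂(f) conj R₂'(g) = -r₂ [f, g](π)`, so the boundary terms cancel both
values.
-/

lemma continuousOn_Icc_of_eq_add_integral {E : Type*} [NormedAddCommGroup E] [NormedSpace ℝ E]
    {φ φ' : ℝ → E} {s t : ℝ} (hst : s ≤ t)
    (hφ : ∀ x ∈ Icc s t, φ x = φ s + ∫ y in s..x, φ' y)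
    (hφ' : IntervalIntegrable φ' volume s t) :
    ContinuousOn φ (Icc s t) := by
  have hprim := intervalIntegral.continuousOn_primitive_interval' hφ' left_mem_uIcc
  rw [uIcc_of_le hst] at hprim
  exact (continuousOn_const.add hprim).congr hφ

section IntegrationByParts

variable {𝕜 : Type*} [RCLike 𝕜]

lemma integral_integral_mul_eq_integral_mul_integral {h k : ℝ → 𝕜} {s t : ℝ} (hst : s ≤ t)
    (hh : IntervalIntegrable h volume s t) (hk : IntervalIntegrable k volume s t) :
    ∫ x in s..t, (∫ y in s..x, h y) * k x = ∫ y in s..t, h y * ∫ x in y..t, k x := by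
  set μ := volume.restrict (Ioc s t)
  set F : ℝ → ℝ → 𝕜 := fun x y =>
    {p : ℝ × ℝ | p.2 ≤ p.1}.indicator (fun z => k z.1 * h z.2) (x, y)
  have hF : Integrable (Function.uncurry F) (μ.prod μ) :=
    (((intervalIntegrable_iff_integrableOn_Ioc_of_le hst).1 hk).mul_prod
      ((intervalIntegrable_iff_integrableOn_Ioc_of_le hst).1 hh)).indicator
      (measurableSet_le measurable_snd measurable_fst)
  have inner_left : ∀ x ∈ Ioc s t, ∫ y, F x y ∂μ = (∫ y in s..x, h y) * k x := by
    intro x hx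
    have : (F x ·) = (Iic x).indicator (fun y => h y * k x) := by
      ext y; simp [F, Set.indicator_apply, mul_comm]
    rw [this, integral_indicator measurableSet_Iic, Measure.restrict_restrict measurableSet_Iic,
      Iic_inter_Ioc_of_le hx.2, integral_mul_const, intervalIntegral.integral_of_le hx.1.le]
  have inner_right : ∀ y ∈ Ioc s t, ∫ x, F x y ∂μ = h y * ∫ x in y..t, k x := by
    intro y hy
    have hset : Ici y ∩ Ioc s t = Icc y t := by
      ext z
      simp only [Set.mem_inter_iff, Set.mem_Ici, Set.mem_Ioc, Set.mem_Icc]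
      constructor
      · rintro ⟨hyz, -, hzt⟩; exact ⟨hyz, hzt⟩
      · rintro ⟨hyz, hzt⟩; exact ⟨hyz, hy.1.trans_le hyz, hzt⟩
    have : (F · y) = (Ici y).indicator (fun x => h y * k x) := by
      ext x; simp [F, Set.indicator_apply, mul_comm]
    rw [this, integral_indicator measurableSet_Ici, Measure.restrict_restrict measurableSet_Ici,
      hset, integral_Icc_eq_integral_Ioc, integral_const_mul, intervalIntegral.integral_of_le hy.2]
  calc ∫ x in s..t, (∫ y in s..x, h y) * k x
      = ∫ x, ∫ y, F x y ∂μ ∂μ := by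
        rw [intervalIntegral.integral_of_le hst]
        exact setIntegral_congr_fun measurableSet_Ioc fun x hx => (inner_left x hx).symm
    _ = ∫ y, ∫ x, F x y ∂μ ∂μ := integral_integral_swap hF
    _ = ∫ y in s..t, h y * ∫ x in y..t, k x := by
        rw [intervalIntegral.integral_of_le hst]
        exact setIntegral_congr_fun measurableSet_Ioc inner_right

lemma integral_mul_eq_sub_of_eq_add_integral {u u' v' v'' : ℝ → 𝕜} {s t : ℝ} (hst : s ≤ t)
    (hu : ∀ x ∈ Icc s t, HasDerivAt u (u' x) x) (hu' : IntervalIntegrable u' volume s t)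
    (hv' : ∀ x ∈ Icc s t, v' x = v' s + ∫ y in s..x, v'' y)
    (hv'' : IntervalIntegrable v'' volume s t) :
    ∫ x in s..t, u x * v'' x = u t * v' t - u s * v' s - ∫ x in s..t, u' x * v' x := by
  have hsub : ∀ x ∈ Icc s t, uIcc s x ⊆ uIcc s t := fun x hx => by
    rw [uIcc_of_le hx.1, uIcc_of_le hst]
    exact Icc_subset_Icc_right hx.2
  have hu_eq : ∀ x ∈ Icc s t, ∫ y in s..x, u' y = u x - u s := fun x hx =>
    intervalIntegral.integral_eq_sub_of_hasDerivAt
      (fun y hy => hu y (by rw [← uIcc_of_le hst]; exact hsub x hx hy)) (hu'.mono_set (hsub x hx))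
  have hv'_eq : ∀ y ∈ Icc s t, ∫ x in y..t, v'' x = v' t - v' y := fun y hy => by
    rw [← intervalIntegral.integral_interval_sub_left hv'' (hv''.mono_set (hsub y hy)),
      hv' t ⟨hst, le_rfl⟩, hv' y hy, add_sub_add_left_eq_sub]
  have hprim : IntervalIntegrable (fun x => (∫ y in s..x, u' y) * v'' x) volume s t :=
    hv''.continuousOn_mul (intervalIntegral.continuousOn_primitive_interval' hu' left_mem_uIcc)
  have hu'v' : IntervalIntegrable (fun x => u' x * v' x) volume s t := by
    refine hu'.mul_continuousOn ?_
    rw [uIcc_of_le hst]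
    exact continuousOn_Icc_of_eq_add_integral hst hv' hv''
  calc ∫ x in s..t, u x * v'' x
      = ∫ x in s..t, (u s * v'' x + (∫ y in s..x, u' y) * v'' x) :=
        intervalIntegral.integral_congr fun x hx => by
          rw [uIcc_of_le hst] at hx
          simp only [hu_eq x hx]
          ring
    _ = u s * (v' t - v' s) + ∫ y in s..t, (u' y * v' t - u' y * v' y) := by
        rw [intervalIntegral.integral_add (hv''.const_mul _) hprim,
          intervalIntegral.integral_const_mul, hv'_eq s ⟨le_rfl, hst⟩,
          integral_integral_mul_eq_integral_mul_integral hst hu' hv'']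
        refine congrArg _ (intervalIntegral.integral_congr fun y hy => ?_)
        rw [uIcc_of_le hst] at hy
        simp only [hv'_eq y hy, mul_sub]
    _ = u t * v' t - u s * v' s - ∫ x in s..t, u' x * v' x := by
        rw [intervalIntegral.integral_sub (hu'.mul_const _) hu'v',
          intervalIntegral.integral_mul_const, hu_eq t ⟨hst, le_rfl⟩]
        ring

lemma integral_mul_sub_mul_eq_sub {u u' u'' v v' v'' : ℝ → 𝕜} {s t : ℝ} (hst : s ≤ t)
    (hu : ∀ x ∈ Icc s t, HasDerivAt u (u' x) x) (hv : ∀ x ∈ Icc s t, HasDerivAt v (v' x) x)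
    (hu' : ∀ x ∈ Icc s t, u' x = u' s + ∫ y in s..x, u'' y)
    (hv' : ∀ x ∈ Icc s t, v' x = v' s + ∫ y in s..x, v'' y)
    (hu'' : IntervalIntegrable u'' volume s t) (hv'' : IntervalIntegrable v'' volume s t) :
    ∫ x in s..t, (u x * v'' x - u'' x * v x)
      = (u t * v' t - u' t * v t) - (u s * v' s - u' s * v s) := by
  have integrable_of_eq_add_integral : ∀ {φ φ' : ℝ → 𝕜},
      (∀ x ∈ Icc s t, φ x = φ s + ∫ y in s..x, φ' y) → IntervalIntegrable φ' volume s t →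
      IntervalIntegrable φ volume s t := fun hφ hφ' =>
    (continuousOn_Icc_of_eq_add_integral hst hφ hφ').intervalIntegrable_of_Icc hst
  have huv := integral_mul_eq_sub_of_eq_add_integral hst hu
    (integrable_of_eq_add_integral hu' hu'') hv' hv''
  have hvu := integral_mul_eq_sub_of_eq_add_integral hst hv
    (integrable_of_eq_add_integral hv' hv'') hu' hu''
  have continuousOn_of_hasDerivAt : ∀ {φ φ' : ℝ → 𝕜}, (∀ x ∈ Icc s t, HasDerivAt φ (φ' x) x) →
      ContinuousOn φ (uIcc s t) := fun hφ x hx =>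
    (hφ x (by rwa [uIcc_of_le hst] at hx)).continuousAt.continuousWithinAt
  have hvu' : ∫ x in s..t, u'' x * v x = v t * u' t - v s * u' s - ∫ x in s..t, v' x * u' x := by
    simp only [mul_comm (u'' _), hvu]
  rw [intervalIntegral.integral_sub (hv''.continuousOn_mul (continuousOn_of_hasDerivAt hu))
    (hu''.mul_continuousOn (continuousOn_of_hasDerivAt hv)), huv, hvu']
  simp only [mul_comm (v' _)]
  ring

end IntegrationByParts

lemma integral_Ioo_eq_sub_of_tendsto {E : Type*} [NormedAddCommGroup E] [NormedSpace ℝ E]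
    {H W : ℝ → E} {p r : ℝ} {A B : E}
    (hpr : p < r) (hH : IntegrableOn H (Ioo p r))
    (hW : ∀ s ∈ Ioo p r, ∀ t ∈ Ioo p r, s ≤ t → ∫ x in s..t, H x = W t - W s)
    (hA : Tendsto W (𝓝[>] p) (𝓝 A)) (hB : Tendsto W (𝓝[<] r) (𝓝 B)) :
    ∫ x in Ioo p r, H x = B - A := by
  have hHi : IntervalIntegrable H volume p r :=
    (intervalIntegrable_iff_integrableOn_Ioo_of_le hpr.le).2 hH
  set F : ℝ → E := fun t => ∫ x in p..t, H x
  have hF : ContinuousOn F (Icc p r) := by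
    simpa only [uIcc_of_le hpr.le] using
      intervalIntegral.continuousOn_primitive_interval' hHi left_mem_uIcc
  obtain ⟨c, hc⟩ := Set.nonempty_Ioo.2 hpr
  have hHx : ∀ x ∈ Ioo p r, IntervalIntegrable H volume p x := fun x hx =>
    hHi.mono_set (uIcc_subset_uIcc_left (Ioo_subset_Icc_self.trans Icc_subset_uIcc hx))
  have hWF : ∀ t ∈ Ioo p r, W t = F t + (W c - F c) := by
    intro t ht
    have hFt : F t - F c = ∫ x in c..t, H x :=
      intervalIntegral.integral_interval_sub_left (hHx t ht) (hHx c hc)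
    rcases le_total c t with hct | htc
    · rw [hW c hc t ht hct] at hFt
      rw [← sub_eq_iff_eq_add', sub_eq_sub_iff_sub_eq_sub, hFt]
    · rw [intervalIntegral.integral_symm, hW t ht c hc htc, neg_sub] at hFt
      rw [← sub_eq_iff_eq_add', sub_eq_sub_iff_sub_eq_sub, hFt]
  have hlim : ∀ x ∈ Icc p r, Tendsto W (𝓝[Ioo p r] x) (𝓝 (F x + (W c - F c))) := fun x hx =>
    (((hF x hx).mono Ioo_subset_Icc_self).tendsto.add_const _).congr'
      (eventually_nhdsWithin_of_forall fun t ht => (hWF t ht).symm)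
  rw [← nhdsWithin_Ioo_eq_nhdsGT hpr] at hA
  rw [← nhdsWithin_Ioo_eq_nhdsLT hpr] at hB
  have : (𝓝[Ioo p r] p).NeBot := by rw [nhdsWithin_Ioo_eq_nhdsGT hpr]; infer_instance
  have : (𝓝[Ioo p r] r).NeBot := by rw [nhdsWithin_Ioo_eq_nhdsLT hpr]; infer_instance
  rw [tendsto_nhds_unique hA (hlim p (left_mem_Icc.2 hpr.le)),
    tendsto_nhds_unique hB (hlim r (right_mem_Icc.2 hpr.le)), ← integral_Ioc_eq_integral_Ioo,
    ← intervalIntegral.integral_of_le hpr.le]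
  simp [F]

lemma exists_norm_le_of_tendsto {E : Type*} [NormedAddCommGroup E] {φ : ℝ → E} {p r : ℝ}
    {A B : E} (hpr : p < r) (hφ : ContinuousOn φ (Ioo p r))
    (hA : Tendsto φ (𝓝[>] p) (𝓝 A)) (hB : Tendsto φ (𝓝[<] r) (𝓝 B)) :
    ∃ C, ∀ x ∈ Ioo p r, ‖φ x‖ ≤ C := by
  set F : ℝ → E := Function.update (Function.update φ p A) r B
  have hF : ContinuousOn F (Icc p r) := by
    rw [continuousOn_update_iff, continuousOn_update_iff, Icc_sdiff_right, Ico_sdiff_left]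
    refine ⟨⟨hφ, fun _ => hA.mono_left (nhdsWithin_mono _ Ioo_subset_Ioi_self)⟩, fun _ => ?_⟩
    refine (hB.congr' ?_).mono_left (nhdsWithin_mono _ Ico_subset_Iio_self)
    filter_upwards [Ioo_mem_nhdsLT_of_mem (right_mem_Ioc.2 hpr)] with z hz using
      (Function.update_of_ne hz.1.ne' _ _).symm
  obtain ⟨C, hC⟩ := isCompact_Icc.exists_bound_of_continuousOn hF
  refine ⟨C, fun x hx => ?_⟩
  simpa [F, Function.update_of_ne hx.2.ne, Function.update_of_ne hx.1.ne'] using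
    hC x (Ioo_subset_Icc_self hx)

lemma MeasureTheory.IntegrableOn.continuousOn_mul_of_norm_le {R : Type*} [NormedRing R]
    {f g : ℝ → R} {s : Set ℝ} (hs : MeasurableSet s) (hg : IntegrableOn g s)
    (hf : ContinuousOn f s) (hfC : ∃ C, ∀ x ∈ s, ‖f x‖ ≤ C) :
    IntegrableOn (fun x => f x * g x) s := by
  obtain ⟨C, hC⟩ := hfC
  exact hg.bdd_mul (hf.aestronglyMeasurable hs) ((ae_restrict_iff' hs).2 (ae_of_all _ hC))

lemma integral_Ioo_eq_sum_integral_Ioo {E : Type*} [NormedAddCommGroup E] [NormedSpace ℝ E]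
    {F : ℝ → E} {d : ℕ → ℝ} {m : ℕ} (hd : MonotoneOn d (Set.Iic m))
    (hF : ∀ j < m, IntegrableOn F (Ioo (d j) (d (j + 1)))) :
    ∫ x in Ioo (d 0) (d m), F x = ∑ j ∈ range m, ∫ x in Ioo (d j) (d (j + 1)), F x := by
  have hle : ∀ j < m, d j ≤ d (j + 1) := fun j hj =>
    hd (Set.mem_Iic.2 hj.le) (Set.mem_Iic.2 hj) (Nat.le_succ j)
  rw [← integral_Ioc_eq_integral_Ioo, ← intervalIntegral.integral_of_le
    (hd (Set.mem_Iic.2 (Nat.zero_le m)) (Set.mem_Iic.2 le_rfl) (Nat.zero_le m)),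
    ← intervalIntegral.sum_integral_adjacent_intervals fun j hj =>
      (intervalIntegrable_iff_integrableOn_Ioo_of_le (hle j hj)).2 (hF j hj)]
  refine Finset.sum_congr rfl fun j hj => ?_
  rw [intervalIntegral.integral_of_le (hle j (Finset.mem_range.1 hj)), integral_Ioc_eq_integral_Ioo]

def lagrangeBracket (u u' v v' : ℂ) : ℂ := u * conj v' - u' * conj v

lemma Filter.Tendsto.lagrangeBracket {l : Filter ℝ} {f f' g g' : ℝ → ℂ} {u u' v v' : ℂ}
    (hf : Tendsto f l (𝓝 u)) (hf' : Tendsto f' l (𝓝 u')) (hg : Tendsto g l (𝓝 v))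
    (hg' : Tendsto g' l (𝓝 v')) :
    Tendsto (fun x => lagrangeBracket (f x) (f' x) (g x) (g' x)) l
      (𝓝 (lagrangeBracket u u' v v')) :=
  (hf.mul hg'.star).sub (hf'.mul hg.star)

lemma integral_Ioo_lagrange_identity {p r : ℝ} {f f' f'' g g' g'' : ℝ → ℂ} {A B : ℂ} (hpr : p < r)
    (hf : ∀ x ∈ Ioo p r, HasDerivAt f (f' x) x) (hg : ∀ x ∈ Ioo p r, HasDerivAt g (g' x) x)
    (hf' : ∀ s ∈ Ioo p r, ∀ t ∈ Ioo p r, f' t - f' s = ∫ x in s..t, f'' x)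
    (hg' : ∀ s ∈ Ioo p r, ∀ t ∈ Ioo p r, g' t - g' s = ∫ x in s..t, g'' x)
    (hf'' : IntegrableOn f'' (Ioo p r)) (hg'' : IntegrableOn g'' (Ioo p r))
    (hfC : ∃ C, ∀ x ∈ Ioo p r, ‖f x‖ ≤ C) (hgC : ∃ C, ∀ x ∈ Ioo p r, ‖g x‖ ≤ C)
    (hA : Tendsto (fun x => lagrangeBracket (f x) (f' x) (g x) (g' x)) (𝓝[>] p) (𝓝 A))
    (hB : Tendsto (fun x => lagrangeBracket (f x) (f' x) (g x) (g' x)) (𝓝[<] r) (𝓝 B)) :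
    ∫ x in Ioo p r, (f x * conj (g'' x) - f'' x * conj (g x)) = B - A := by
  have hfc : ContinuousOn f (Ioo p r) := fun x hx => (hf x hx).continuousAt.continuousWithinAt
  have hgc : ContinuousOn (fun x => conj (g x)) (Ioo p r) := fun x hx =>
    (hg x hx).star.continuousAt.continuousWithinAt
  have hg''c : IntegrableOn (fun x => conj (g'' x)) (Ioo p r) :=
    Complex.conjCLE.toContinuousLinearMap.integrable_comp hg''
  have hgCc : ∃ C, ∀ x ∈ Ioo p r, ‖conj (g x)‖ ≤ C := by simpa only [Complex.norm_conj] using hgC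
  refine integral_Ioo_eq_sub_of_tendsto hpr
    ((hg''c.continuousOn_mul_of_norm_le measurableSet_Ioo hfc hfC).sub ?_)
    (fun s hs t ht hst => ?_) hA hB
  · simpa only [mul_comm] using hf''.continuousOn_mul_of_norm_le measurableSet_Ioo hgc hgCc
  have hsub : Icc s t ⊆ Ioo p r := Icc_subset_Ioo hs.1 ht.2
  have hint : ∀ {φ : ℝ → ℂ}, IntegrableOn φ (Ioo p r) → IntervalIntegrable φ volume s t :=
    fun hφ => (intervalIntegrable_iff_integrableOn_Ioc_of_le hst).2
      (hφ.mono_set (Ioc_subset_Icc_self.trans hsub))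
  refine integral_mul_sub_mul_eq_sub (v := fun x => conj (g x)) (v' := fun x => conj (g' x)) hst
    (fun x hx => hf x (hsub hx))
    (fun x hx => (hg x (hsub hx)).star) (fun x hx => ?_) (fun x hx => ?_) (hint hf'') (hint hg''c)
  · rw [← hf' s hs x (hsub hx), add_sub_cancel]
  · rw [intervalIntegral.intervalIntegral_conj, ← map_add, ← hg' s hs x (hsub hx), add_sub_cancel]

lemma integral_Ioo_green {p r : ℝ} {q : ℝ → ℝ} {f f' f'' g g' g'' : ℝ → ℂ} {A B : ℂ}
    (hpr : p < r) (hq : IntegrableOn q (Ioo p r))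
    (hf : ∀ x ∈ Ioo p r, HasDerivAt f (f' x) x) (hg : ∀ x ∈ Ioo p r, HasDerivAt g (g' x) x)
    (hf' : ∀ s ∈ Ioo p r, ∀ t ∈ Ioo p r, f' t - f' s = ∫ x in s..t, f'' x)
    (hg' : ∀ s ∈ Ioo p r, ∀ t ∈ Ioo p r, g' t - g' s = ∫ x in s..t, g'' x)
    (hLf : IntegrableOn (fun x => -f'' x + (q x : ℂ) * f x) (Ioo p r))
    (hLg : IntegrableOn (fun x => -g'' x + (q x : ℂ) * g x) (Ioo p r))
    (hfC : ∃ C, ∀ x ∈ Ioo p r, ‖f x‖ ≤ C) (hgC : ∃ C, ∀ x ∈ Ioo p r, ‖g x‖ ≤ C)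
    (hA : Tendsto (fun x => lagrangeBracket (f x) (f' x) (g x) (g' x)) (𝓝[>] p) (𝓝 A))
    (hB : Tendsto (fun x => lagrangeBracket (f x) (f' x) (g x) (g' x)) (𝓝[<] r) (𝓝 B)) :
    ∫ x in Ioo p r, ((-f'' x + (q x : ℂ) * f x) * conj (g x)
      - f x * conj (-g'' x + (q x : ℂ) * g x)) = B - A := by
  have integrableOn_second_deriv : ∀ {y y' y'' : ℝ → ℂ}, (∀ x ∈ Ioo p r, HasDerivAt y (y' x) x) →
      IntegrableOn (fun x => -y'' x + (q x : ℂ) * y x) (Ioo p r) →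
      (∃ C, ∀ x ∈ Ioo p r, ‖y x‖ ≤ C) → IntegrableOn y'' (Ioo p r) := by
    intro y y' y'' hy hLy hyC
    have hqy : IntegrableOn (fun x => y x * (q x : ℂ)) (Ioo p r) :=
      IntegrableOn.continuousOn_mul_of_norm_le measurableSet_Ioo hq.ofReal
        (fun x hx => (hy x hx).continuousAt.continuousWithinAt) hyC
    exact (hqy.sub hLy).congr_fun (fun x _ => by simp only [Pi.sub_apply]; ring) measurableSet_Ioo
  rw [← integral_Ioo_lagrange_identity hpr hf hg hf' hg' (integrableOn_second_deriv hf hLf hfC)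
    (integrableOn_second_deriv hg hLg hgC) hfC hgC hA hB]
  refine setIntegral_congr_fun measurableSet_Ioo fun x _ => ?_
  simp only [map_add, map_neg, map_mul, Complex.conj_ofReal]
  ring

lemma lagrangeBracket_transmission (α β γ : ℝ) (u u' v v' : ℂ) :
    lagrangeBracket (α * u) (β * u' + γ * u) (α * v) (β * v' + γ * v)
      = (α * β : ℝ) * lagrangeBracket u u' v v' := by
  simp only [lagrangeBracket, map_add, map_mul, Complex.conj_ofReal]
  push_cast
  ring

lemma boundary_terms_sub (w r h₁ h₂ h₃ : ℝ) (u u' v v' : ℂ) :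
    ((w / r : ℝ) : ℂ) * (h₂ * u' + h₃ * u) * conj (v' + h₁ * v)
      - ((w / r : ℝ) : ℂ) * (u' + h₁ * u) * conj (h₂ * v' + h₃ * v)
      = (w * ((h₃ - h₁ * h₂) / r) : ℝ) * lagrangeBracket u u' v v' := by
  simp only [lagrangeBracket, map_add, map_mul, Complex.conj_ofReal]
  push_cast
  ring

/-- The value of `wfun` on `(d j, d (j + 1))`; clamping `j` at `m - 1` makes `weightOn m a b m` its
value at `d m` too. -/
def weightOn (m : ℕ) (a b : ℕ → ℝ) (j : ℕ) : ℝ :=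
  ∏ i ∈ Finset.Icc 1 (min j (m - 1)), (a i * b i)⁻¹

section Weight

variable {m j : ℕ} {d a b : ℕ → ℝ}

lemma wfun_eq_weightOn {x : ℝ} (hx : ∀ i ∈ Finset.Icc 1 (m - 1), d i < x ↔ i ≤ j) :
    wfun m d a b x = weightOn m a b j := by
  calc wfun m d a b x = ∏ i ∈ Finset.Icc 1 (m - 1), if i ≤ j then (a i * b i)⁻¹ else 1 :=
        Finset.prod_congr rfl fun i hi => if_congr (hx i hi) rfl rfl
    _ = weightOn m a b j := by
        rw [← Finset.prod_filter, weightOn]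
        congr 1
        ext i
        simp only [Finset.mem_filter, Finset.mem_Icc]
        omega

lemma wfun_eq_weightOn_of_mem_Ioo (hd : StrictMonoOn d (Set.Iic m)) (hj : j < m) {x : ℝ}
    (hx : x ∈ Ioo (d j) (d (j + 1))) : wfun m d a b x = weightOn m a b j := by
  refine wfun_eq_weightOn fun i hi => ?_
  have him : i ∈ Set.Iic m := Set.mem_Iic.2 (by simp only [Finset.mem_Icc] at hi; omega)
  constructor
  · intro hix
    by_contra! hji
    exact (hx.2.trans_le ((hd.le_iff_le (Set.mem_Iic.2 hj) him).2 hji)).not_gt hix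
  · intro hij
    exact ((hd.le_iff_le him (Set.mem_Iic.2 hj.le)).2 hij).trans_lt hx.1

lemma integral_Ioo_mul_wfun (hd : StrictMonoOn d (Set.Iic m)) (hj : j < m) (F : ℝ → ℂ) :
    ∫ x in Ioo (d j) (d (j + 1)), F x * (wfun m d a b x : ℂ)
      = (∫ x in Ioo (d j) (d (j + 1)), F x) * weightOn m a b j := by
  rw [← integral_mul_const]
  exact setIntegral_congr_fun measurableSet_Ioo fun x hx => by
    rw [wfun_eq_weightOn_of_mem_Ioo hd hj hx]

lemma integrableOn_Ioo_mul_wfun (hd : StrictMonoOn d (Set.Iic m)) (hj : j < m) {F : ℝ → ℂ}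
    (hF : IntegrableOn F (Ioo (d j) (d (j + 1)))) :
    IntegrableOn (fun x => F x * (wfun m d a b x : ℂ)) (Ioo (d j) (d (j + 1))) :=
  IntegrableOn.congr_fun (hF.mul_const _) (fun x hx => by
    rw [wfun_eq_weightOn_of_mem_Ioo hd hj hx]) measurableSet_Ioo

lemma wfun_apply_zero (hd : StrictMonoOn d (Set.Iic m)) :
    wfun m d a b (d 0) = weightOn m a b 0 := by
  refine wfun_eq_weightOn fun i hi => ?_
  simp only [Finset.mem_Icc] at hi
  exact iff_of_false
    (hd (Set.mem_Iic.2 (Nat.zero_le m)) (Set.mem_Iic.2 (by omega)) (by omega)).not_gt (by omega)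

lemma wfun_apply_last (hd : StrictMonoOn d (Set.Iic m)) :
    wfun m d a b (d m) = weightOn m a b m := by
  refine wfun_eq_weightOn fun i hi => ?_
  simp only [Finset.mem_Icc] at hi
  exact iff_of_true (hd (Set.mem_Iic.2 (by omega)) (Set.mem_Iic.2 le_rfl) (by omega)) (by omega)

lemma weightOn_last : weightOn m a b m = weightOn m a b (m - 1) := by
  simp only [weightOn, min_self, min_eq_right (Nat.sub_le m 1)]

lemma weightOn_succ_mul_lagrangeBracket_transmission (c : ℕ → ℝ) (hj : j + 1 < m)
    (hab : a (j + 1) * b (j + 1) ≠ 0) (u u' v v' : ℂ) :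
    (weightOn m a b (j + 1) : ℂ) * lagrangeBracket (a (j + 1) * u)
      (b (j + 1) * u' + c (j + 1) * u) (a (j + 1) * v) (b (j + 1) * v' + c (j + 1) * v)
      = weightOn m a b j * lagrangeBracket u u' v v' := by
  have hsucc : weightOn m a b (j + 1) = weightOn m a b j * (a (j + 1) * b (j + 1))⁻¹ := by
    rw [weightOn, weightOn, min_eq_left (by omega), min_eq_left (by omega)]
    exact Finset.prod_Icc_succ_top (by omega) _
  rw [lagrangeBracket_transmission, hsucc, Complex.ofReal_mul, mul_assoc,
    ← mul_assoc (((a (j + 1) * b (j + 1))⁻¹ : ℝ) : ℂ), ← Complex.ofReal_mul, inv_mul_cancel₀ hab,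
    Complex.ofReal_one, one_mul]

end Weight

section Domain

variable {m j : ℕ} {d a b c : ℕ → ℝ} {q : ℝ → ℝ} {y y' y'' : ℝ → ℂ}

lemma InDomainTrans.continuousOn (hy : InDomainTrans m d a b c q y y' y'') (hj : j < m) :
    ContinuousOn y (Ioo (d j) (d (j + 1))) := fun x hx =>
  (hy.1 j hj x hx).continuousAt.continuousWithinAt

lemma InDomainTrans.tendsto_nhdsGT (hy : InDomainTrans m d a b c q y y' y'') (hj : j < m) :
    Tendsto y (𝓝[>] d j) (𝓝 (y (d j))) ∧ Tendsto y' (𝓝[>] d j) (𝓝 (y' (d j))) :=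
  ⟨((hy.2.2.1 j hj).1.mono Ioi_subset_Ici_self).tendsto,
    ((hy.2.2.1 j hj).2.mono Ioi_subset_Ici_self).tendsto⟩

lemma InDomainTrans.exists_tendsto_nhdsLT (hy : InDomainTrans m d a b c q y y' y'') (hj : j < m) :
    ∃ yl yl' : ℂ, Tendsto y (𝓝[<] d (j + 1)) (𝓝 yl) ∧ Tendsto y' (𝓝[<] d (j + 1)) (𝓝 yl') ∧
      (j + 1 < m →
        y (d (j + 1)) = a (j + 1) * yl ∧ y' (d (j + 1)) = b (j + 1) * yl' + c (j + 1) * yl) ∧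
      (j + 1 = m → y (d (j + 1)) = yl ∧ y' (d (j + 1)) = yl') := by
  rcases (show j + 1 ≤ m from hj).lt_or_eq with hlt | rfl
  · obtain ⟨yl, yl', hyl, hyl', hjump, hjump'⟩ := hy.2.2.2.2.1 (j + 1) (Nat.le_add_left 1 j) hlt
    exact ⟨yl, yl', hyl, hyl', fun _ => ⟨hjump, hjump'⟩, fun h => absurd h hlt.ne⟩
  · obtain ⟨hyc, hyc'⟩ := hy.2.2.2.1
    exact ⟨_, _, (hyc.mono Iio_subset_Iic_self).tendsto, (hyc'.mono Iio_subset_Iic_self).tendsto,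
      fun h => absurd h (lt_irrefl _), fun _ => ⟨rfl, rfl⟩⟩

lemma InDomainTrans.exists_norm_le (hy : InDomainTrans m d a b c q y y' y'') (hj : j < m)
    (hdj : d j < d (j + 1)) : ∃ C, ∀ x ∈ Ioo (d j) (d (j + 1)), ‖y x‖ ≤ C := by
  obtain ⟨yl, -, hyl, -⟩ := hy.exists_tendsto_nhdsLT hj
  exact exists_norm_le_of_tendsto hdj (hy.continuousOn hj) (hy.tendsto_nhdsGT hj).1 hyl

end Domain

lemma InDomainTrans.weighted_green_subinterval {m j : ℕ} {d a b c : ℕ → ℝ} {q : ℝ → ℝ}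
    {f f' f'' g g' g'' : ℝ → ℂ}
    (hf : InDomainTrans m d a b c q f f' f'') (hg : InDomainTrans m d a b c q g g' g'')
    (hd : StrictMonoOn d (Set.Iic m)) (hab : ∀ i, 1 ≤ i → i < m → a i * b i ≠ 0) (hj : j < m)
    (hq : IntegrableOn q (Ioo (d j) (d (j + 1))))
    (hLf : IntegrableOn (fun x => -f'' x + (q x : ℂ) * f x) (Ioo (d j) (d (j + 1))))
    (hLg : IntegrableOn (fun x => -g'' x + (q x : ℂ) * g x) (Ioo (d j) (d (j + 1)))) :
    IntegrableOn (fun x => (-f'' x + (q x : ℂ) * f x) * conj (g x) * (wfun m d a b x : ℂ))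
      (Ioo (d j) (d (j + 1))) ∧
    IntegrableOn (fun x => f x * conj (-g'' x + (q x : ℂ) * g x) * (wfun m d a b x : ℂ))
      (Ioo (d j) (d (j + 1))) ∧
    (∫ x in Ioo (d j) (d (j + 1)), (-f'' x + (q x : ℂ) * f x) * conj (g x) * (wfun m d a b x : ℂ))
      - (∫ x in Ioo (d j) (d (j + 1)),
          f x * conj (-g'' x + (q x : ℂ) * g x) * (wfun m d a b x : ℂ))
      = weightOn m a b (j + 1) * lagrangeBracket (f (d (j + 1))) (f' (d (j + 1)))
          (g (d (j + 1))) (g' (d (j + 1)))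
        - weightOn m a b j * lagrangeBracket (f (d j)) (f' (d j)) (g (d j)) (g' (d j)) := by
  set I := Ioo (d j) (d (j + 1))
  have hdj : d j < d (j + 1) := hd (Set.mem_Iic.2 hj.le) (Set.mem_Iic.2 hj) (Nat.lt_succ_self j)
  obtain ⟨fl, fl', hfl, hfl', hf_int, hf_end⟩ := hf.exists_tendsto_nhdsLT hj
  obtain ⟨gl, gl', hgl, hgl', hg_int, hg_end⟩ := hg.exists_tendsto_nhdsLT hj
  obtain ⟨hfr, hfr'⟩ := hf.tendsto_nhdsGT hj
  obtain ⟨hgr, hgr'⟩ := hg.tendsto_nhdsGT hj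
  have hfC := hf.exists_norm_le hj hdj
  have hgC := hg.exists_norm_le hj hdj
  have hgreen := integral_Ioo_green hdj hq (hf.1 j hj) (hg.1 j hj) (hf.2.1 j hj) (hg.2.1 j hj)
    hLf hLg hfC hgC (hfr.lagrangeBracket hfr' hgr hgr') (hfl.lagrangeBracket hfl' hgl hgl')
  have hjump : (weightOn m a b (j + 1) : ℂ) * lagrangeBracket (f (d (j + 1))) (f' (d (j + 1)))
      (g (d (j + 1))) (g' (d (j + 1))) = weightOn m a b j * lagrangeBracket fl fl' gl gl' := by
    rcases (show j + 1 ≤ m from hj).lt_or_eq with hlt | hlast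
    · rw [(hf_int hlt).1, (hf_int hlt).2, (hg_int hlt).1, (hg_int hlt).2]
      exact weightOn_succ_mul_lagrangeBracket_transmission c hlt
        (hab _ (Nat.le_add_left 1 j) hlt) _ _ _ _
    · rw [(hf_end hlast).1, (hf_end hlast).2, (hg_end hlast).1, (hg_end hlast).2, hlast,
        weightOn_last, ← hlast, Nat.add_sub_cancel]
  have hgc : ContinuousOn (fun x => conj (g x)) I := fun x hx =>
    (hg.continuousOn hj x hx).star
  have hgCc : ∃ C, ∀ x ∈ I, ‖conj (g x)‖ ≤ C := by simpa only [Complex.norm_conj] using hgC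
  have hF₁ : IntegrableOn (fun x => (-f'' x + (q x : ℂ) * f x) * conj (g x)) I := by
    simpa only [mul_comm] using hLf.continuousOn_mul_of_norm_le measurableSet_Ioo hgc hgCc
  have hF₂ : IntegrableOn (fun x => f x * conj (-g'' x + (q x : ℂ) * g x)) I :=
    IntegrableOn.continuousOn_mul_of_norm_le measurableSet_Ioo
      (Complex.conjCLE.toContinuousLinearMap.integrable_comp hLg) (hf.continuousOn hj) hfC
  refine ⟨integrableOn_Ioo_mul_wfun hd hj hF₁, integrableOn_Ioo_mul_wfun hd hj hF₂, ?_⟩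
  rw [integral_Ioo_mul_wfun hd hj, integral_Ioo_mul_wfun hd hj, ← sub_mul,
    ← integral_sub hF₁ hF₂, hgreen, hjump]
  ring

lemma InDomainTrans.weighted_green {m : ℕ} {d a b c : ℕ → ℝ} {q : ℝ → ℝ}
    {f f' f'' g g' g'' : ℝ → ℂ}
    (hf : InDomainTrans m d a b c q f f' f'') (hg : InDomainTrans m d a b c q g g' g'')
    (hd : StrictMonoOn d (Set.Iic m)) (hab : ∀ i, 1 ≤ i → i < m → a i * b i ≠ 0)
    (hq : IntegrableOn q (Ioo (d 0) (d m)))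
    (hLf : IntegrableOn (fun x => -f'' x + (q x : ℂ) * f x) (Ioo (d 0) (d m)))
    (hLg : IntegrableOn (fun x => -g'' x + (q x : ℂ) * g x) (Ioo (d 0) (d m))) :
    (∫ x in Ioo (d 0) (d m), (-f'' x + (q x : ℂ) * f x) * conj (g x) * (wfun m d a b x : ℂ))
      - (∫ x in Ioo (d 0) (d m), f x * conj (-g'' x + (q x : ℂ) * g x) * (wfun m d a b x : ℂ))
      = weightOn m a b m * lagrangeBracket (f (d m)) (f' (d m)) (g (d m)) (g' (d m))
        - weightOn m a b 0 * lagrangeBracket (f (d 0)) (f' (d 0)) (g (d 0)) (g' (d 0)) := by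
  have hsub : ∀ j < m, Ioo (d j) (d (j + 1)) ⊆ Ioo (d 0) (d m) := fun j hj =>
    Ioo_subset_Ioo (hd.monotoneOn (Set.mem_Iic.2 (Nat.zero_le m)) (Set.mem_Iic.2 hj.le)
      (Nat.zero_le j)) (hd.monotoneOn (Set.mem_Iic.2 hj) (Set.mem_Iic.2 le_rfl) hj)
  have hpiece := fun j (hj : j < m) => hf.weighted_green_subinterval hg hd hab hj
    (hq.mono_set (hsub j hj)) (hLf.mono_set (hsub j hj)) (hLg.mono_set (hsub j hj))
  rw [integral_Ioo_eq_sum_integral_Ioo hd.monotoneOn fun j hj => (hpiece j hj).1,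
    integral_Ioo_eq_sum_integral_Ioo hd.monotoneOn fun j hj => (hpiece j hj).2.1,
    ← Finset.sum_sub_distrib,
    Finset.sum_congr rfl fun j hj => (hpiece j (Finset.mem_range.1 hj)).2.2]
  exact Finset.sum_range_sub (fun j => (weightOn m a b j : ℂ) *
    lagrangeBracket (f (d j)) (f' (d j)) (g (d j)) (g' (d j))) m

theorem eigenparameter_operator_symmetric_general
    (m : ℕ) (d a b c : ℕ → ℝ) (q : ℝ → ℝ) (h1 h2 h3 H1 H2 H3 : ℝ)
    (hd0 : d 0 = 0) (hdm : d m = Real.pi)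
    (hdmono : ∀ i < m, d i < d (i + 1))
    (hab : ∀ i, 1 ≤ i → i < m → 0 < a i * b i)
    (hq : MeasureTheory.IntegrableOn q (Set.Ioo 0 Real.pi))
    (hr1 : 0 < h3 - h1 * h2) (hr2 : 0 < H1 * H2 - H3)
    (f f' f'' g g' g'' : ℝ → ℂ)
    (hf : InDomainTrans m d a b c q f f' f'')
    (hg : InDomainTrans m d a b c q g g' g'') :
    (∫ x in Set.Ioo (0 : ℝ) Real.pi,
        (-f'' x + (q x : ℂ) * f x) * conj (g x) * (wfun m d a b x : ℂ)) +
      ((wfun m d a b 0 / (h3 - h1 * h2) : ℝ) : ℂ) *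
        ((h2 : ℂ) * f' 0 + (h3 : ℂ) * f 0) * conj (g' 0 + (h1 : ℂ) * g 0) +
      ((wfun m d a b Real.pi / (H1 * H2 - H3) : ℝ) : ℂ) *
        ((H2 : ℂ) * f' Real.pi + (H3 : ℂ) * f Real.pi) *
          conj (g' Real.pi + (H1 : ℂ) * g Real.pi) =
    (∫ x in Set.Ioo (0 : ℝ) Real.pi,
        f x * conj (-g'' x + (q x : ℂ) * g x) * (wfun m d a b x : ℂ)) +
      ((wfun m d a b 0 / (h3 - h1 * h2) : ℝ) : ℂ) *
        (f' 0 + (h1 : ℂ) * f 0) * conj ((h2 : ℂ) * g' 0 + (h3 : ℂ) * g 0) +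
      ((wfun m d a b Real.pi / (H1 * H2 - H3) : ℝ) : ℂ) *
        (f' Real.pi + (H1 : ℂ) * f Real.pi) *
          conj ((H2 : ℂ) * g' Real.pi + (H3 : ℂ) * g Real.pi) := by
  have hd : StrictMonoOn d (Set.Iic m) := strictMonoOn_Iic_of_lt_succ fun i hi => by
    simpa only [Order.succ_eq_add_one] using hdmono i hi
  have hL : ∀ {y y'' : ℝ → ℂ},
      MemLp (fun x => -y'' x + (q x : ℂ) * y x) 2 (volume.restrict (Ioo 0 Real.pi)) →
      IntegrableOn (fun x => -y'' x + (q x : ℂ) * y x) (Ioo (d 0) (d m)) := fun hy => by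
    rw [hd0, hdm]
    exact hy.integrable one_le_two
  have hgreen := hf.weighted_green hg hd (fun i h₁ h₂ => (hab i h₁ h₂).ne')
    (by rwa [hd0, hdm]) (hL hf.2.2.2.2.2) (hL hg.2.2.2.2.2)
  rw [hd0, hdm] at hgreen
  rw [show wfun m d a b 0 = weightOn m a b 0 from hd0 ▸ wfun_apply_zero hd,
    show wfun m d a b Real.pi = weightOn m a b m from hdm ▸ wfun_apply_last hd]
  have h0 := boundary_terms_sub (weightOn m a b 0) (h3 - h1 * h2) h1 h2 h3 (f 0) (f' 0) (g 0) (g' 0)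
  rw [div_self hr1.ne', mul_one] at h0
  have hπ := boundary_terms_sub (weightOn m a b m) (H1 * H2 - H3) H1 H2 H3
    (f Real.pi) (f' Real.pi) (g Real.pi) (g' Real.pi)
  rw [← neg_sub (H1 * H2) H3, neg_div, div_self hr2.ne', mul_neg_one, Complex.ofReal_neg] at hπ
  linear_combination hgreen + h0 + hπ

/-- Green's identity for the eigenparameter-dependent problem: the operator
`A (f, R₁ f, R₂ f) = (-f'' + q f, R₁' f, R₂' f)` is symmetric in
`L²((0,π); w dx) ⊕ ℂ²` with the weights `w(0)/r₁`, `w(π)/r₂` on the boundary components. -/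
theorem eigenparameter_operator_symmetric
    (m : ℕ) (d a b c : ℕ → ℝ) (q : ℝ → ℝ) (h1 h2 h3 H1 H2 H3 : ℝ)
    (hm : 2 ≤ m)
    (hd0 : d 0 = 0) (hdm : d m = Real.pi)
    (hdmono : ∀ i < m, d i < d (i + 1))
    (hab : ∀ i, 1 ≤ i → i < m → 0 < a i * b i)
    (hq : MeasureTheory.IntegrableOn q (Set.Ioo 0 Real.pi))
    (hr1 : 0 < h3 - h1 * h2) (hr2 : 0 < H1 * H2 - H3)
    (f f' f'' g g' g'' : ℝ → ℂ)
    (hf : InDomainTrans m d a b c q f f' f'')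
    (hg : InDomainTrans m d a b c q g g' g'') :
    (∫ x in Set.Ioo (0 : ℝ) Real.pi,
        (-f'' x + (q x : ℂ) * f x) * conj (g x) * (wfun m d a b x : ℂ)) +
      ((wfun m d a b 0 / (h3 - h1 * h2) : ℝ) : ℂ) *
        ((h2 : ℂ) * f' 0 + (h3 : ℂ) * f 0) * conj (g' 0 + (h1 : ℂ) * g 0) +
      ((wfun m d a b Real.pi / (H1 * H2 - H3) : ℝ) : ℂ) *
        ((H2 : ℂ) * f' Real.pi + (H3 : ℂ) * f Real.pi) *
          conj (g' Real.pi + (H1 : ℂ) * g Real.pi) =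
    (∫ x in Set.Ioo (0 : ℝ) Real.pi,
        f x * conj (-g'' x + (q x : ℂ) * g x) * (wfun m d a b x : ℂ)) +
      ((wfun m d a b 0 / (h3 - h1 * h2) : ℝ) : ℂ) *
        (f' 0 + (h1 : ℂ) * f 0) * conj ((h2 : ℂ) * g' 0 + (h3 : ℂ) * g 0) +
      ((wfun m d a b Real.pi / (H1 * H2 - H3) : ℝ) : ℂ) *
        (f' Real.pi + (H1 : ℂ) * f Real.pi) *
          conj ((H2 : ℂ) * g' Real.pi + (H3 : ℂ) * g Real.pi) :=
  eigenparameter_operator_symmetric_general m d a b c q h1 h2 h3 H1 H2 H3 hd0 hdm hdmono hab hq hr1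
    hr2 f f' f'' g g' g'' hf hg
end
end
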